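/- arXiv:2406.17350 — 5 statements merged into one kernel-verified Lean document; each statement's English description precedes it below -/
import Mathlib

section
/- Let Ω ⊆ ℝ^N be open, let φ ∈ C²(Ω) be positive, and let u ∈ C_0^∞(Ω). Then ∫_Ω |∇u - (∇φ/φ)u|² dx = ∫_Ω |∇u|² dx + ∫_Ω (Δφ/φ)|u|² dx. -/
open MeasureTheory

noncomputable def lap {N : ℕ} (f : EuclideanSpace ℝ (Fin N) → ℝ)
    (x : EuclideanSpace ℝ (Fin N)) : ℝ :=
  ∑ i, fderiv ℝ (fun y => fderiv ℝ f y (EuclideanSpace.single i 1)) x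
    (EuclideanSpace.single i 1)

open Set Filter Topology Manifold

lemma gradient_coord {N : ℕ} (f : EuclideanSpace ℝ (Fin N) → ℝ) (x : EuclideanSpace ℝ (Fin N))
    (i : Fin N) : gradient f x i = fderiv ℝ f x (EuclideanSpace.single i 1) := by
  have h : (inner ℝ (gradient f x) (EuclideanSpace.single i 1) : ℝ)
      = fderiv ℝ f x (EuclideanSpace.single i 1) := by
    rw [gradient]
    exact InnerProductSpace.toDual_symm_apply
  rw [EuclideanSpace.inner_single_right] at h; simpa only [one_mul, conj_trivial] using h

lemma norm_sq_coord {N : ℕ} (v : EuclideanSpace ℝ (Fin N)) : ‖v‖ ^ 2 = ∑ i, (v i) ^ 2 := by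
  simpa [Real.norm_eq_abs, sq_abs] using PiLp.norm_sq_eq_of_L2 _ v

set_option maxHeartbeats 1000000 in
/-- Hardy-type ground state identity. -/
theorem hardy_identity (N : ℕ) (Ω : Set (EuclideanSpace ℝ (Fin N))) (hΩ : IsOpen Ω)
    (φ : EuclideanSpace ℝ (Fin N) → ℝ) (hφ : ContDiffOn ℝ 2 φ Ω)
    (hφpos : ∀ x ∈ Ω, 0 < φ x)
    (u : EuclideanSpace ℝ (Fin N) → ℝ)
    (hu : ContDiff ℝ (⊤ : ℕ∞) u) (hc : HasCompactSupport u) (hsupp : tsupport u ⊆ Ω) :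
    (∫ x in Ω, ‖gradient u x - (u x / φ x) • gradient φ x‖ ^ 2)
      = (∫ x in Ω, ‖gradient u x‖ ^ 2)
        + ∫ x in Ω, (lap φ x / φ x) * (u x) ^ 2 := by
  classical
  have hu2 : ContDiff ℝ 2 u := hu.of_le (by exact WithTop.coe_le_coe.mpr (le_top : (2 : ℕ∞) ≤ ⊤))
  have huD : Differentiable ℝ u := hu2.differentiable two_ne_zero
  obtain ⟨L, hLc, hKL, hLΩ⟩ := exists_compact_between hc hΩ hsupp
  obtain ⟨χ, hχsm, hχ1, hχ0⟩ : ∃ χ : EuclideanSpace ℝ (Fin N) → ℝ,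
      ContDiff ℝ 2 χ ∧ (∀ᶠ x in 𝓝ˢ (tsupport u), χ x = 1) ∧ ∀ x ∉ L, χ x = 0 := by
    obtain ⟨f, h1, h0, _⟩ := exists_contMDiffMap_one_nhds_of_subset_interior (n := (⊤ : ℕ∞))
      (modelWithCornersSelf ℝ (EuclideanSpace ℝ (Fin N))) (isClosed_tsupport u) hKL
    refine ⟨f, ?_, h1, h0⟩
    have hsm := contMDiff_iff_contDiff.mp f.contMDiff
    refine hsm.of_le ?_
    rw [show ((2 : WithTop ℕ∞)) = ((2 : ℕ∞) : WithTop ℕ∞) from rfl]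
    exact_mod_cast le_top
  obtain ⟨V0, hV0o, hKV0, hχV0⟩ : ∃ Vs, IsOpen Vs ∧ tsupport u ⊆ Vs ∧ ∀ x ∈ Vs, χ x = 1 := by
    rw [eventually_nhdsSet_iff_exists] at hχ1; exact hχ1
  set V := V0 ∩ Ω with hVdef
  have hVo : IsOpen V := hV0o.inter hΩ
  have hKV : tsupport u ⊆ V := subset_inter hKV0 hsupp
  have hVΩ : V ⊆ Ω := inter_subset_right
  -- the global C² extension Φ of φ near the support of u
  set Φ : EuclideanSpace ℝ (Fin N) → ℝ := fun x => if x ∈ Ω then χ x * φ x else 0 with hΦdef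
  have hΦloc : ∀ x ∈ Ω, Φ =ᶠ[𝓝 x] fun y => χ y * φ y := by
    intro x hx
    filter_upwards [hΩ.mem_nhds hx] with y hy
    simp [hΦdef, hy]
  have hΦout : ∀ x ∉ L, Φ =ᶠ[𝓝 x] fun _ => (0 : ℝ) := by
    intro x hx
    filter_upwards [hLc.isClosed.isOpen_compl.mem_nhds hx] with y hy
    simp [hΦdef, hχ0 y hy]
  have hΦC2 : ContDiff ℝ 2 Φ := by
    rw [contDiff_iff_contDiffAt]
    intro x
    by_cases hx : x ∈ Ω
    · exact ((hχsm.contDiffAt).mul (hφ.contDiffAt (hΩ.mem_nhds hx))).congr_of_eventuallyEq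
        (hΦloc x hx)
    · exact contDiffAt_const.congr_of_eventuallyEq (hΦout x fun hL => hx (hLΩ hL))
  have hΦeqφ : Set.EqOn Φ φ V := by
    intro x hx
    simp [hΦdef, hVΩ hx, hχV0 x hx.1]
  have hfΦ : ∀ x ∈ V, fderiv ℝ Φ x = fderiv ℝ φ x := fun x hx =>
    Filter.EventuallyEq.fderiv_eq (hΦeqφ.eventuallyEq_of_mem (hVo.mem_nhds hx))
  have hlapΦ : ∀ x ∈ V, lap Φ x = lap φ x := by
    intro x hx
    unfold lap
    refine Finset.sum_congr rfl fun i _ => ?_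
    have hEE : (fun y => fderiv ℝ Φ y (EuclideanSpace.single i 1)) =ᶠ[𝓝 x]
        fun y => fderiv ℝ φ y (EuclideanSpace.single i 1) := by
      filter_upwards [hVo.mem_nhds hx] with y hy
      rw [hfΦ y hy]
    rw [hEE.fderiv_eq]
  -- the global C¹ extension w of u²/φ
  set w : EuclideanSpace ℝ (Fin N) → ℝ := fun x => if x ∈ Ω then u x ^ 2 / φ x else 0 with hwdef
  have hw0 : ∀ x ∉ tsupport u, w x = 0 := by
    intro x hx
    by_cases hxΩ : x ∈ Ω
    · simp [hwdef, hxΩ, image_eq_zero_of_notMem_tsupport hx]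
    · simp [hwdef, hxΩ]
  have hwloc : ∀ x ∈ Ω, w =ᶠ[𝓝 x] fun y => u y ^ 2 / φ y := by
    intro x hx; filter_upwards [hΩ.mem_nhds hx] with y hy; simp [hwdef, hy]
  have hKo : IsOpen (tsupport u)ᶜ := (isClosed_tsupport u).isOpen_compl
  have hwout : ∀ x ∉ tsupport u, w =ᶠ[𝓝 x] fun _ => (0 : ℝ) := by
    intro x hx; filter_upwards [hKo.mem_nhds hx] with y hy; simp [hw0 y hy]
  have hφdiff : ∀ x ∈ Ω, DifferentiableAt ℝ φ x := fun x hx =>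
    (hφ.contDiffAt (hΩ.mem_nhds hx)).differentiableAt two_ne_zero
  have hwC1 : ContDiff ℝ 1 w := by
    rw [contDiff_iff_contDiffAt]
    intro x
    by_cases hx : x ∈ Ω
    · have h1 : ContDiffAt ℝ 1 (fun y => u y ^ 2 / φ y) x :=
        ((hu2.contDiffAt.of_le one_le_two).pow 2).div
          ((hφ.contDiffAt (hΩ.mem_nhds hx)).of_le one_le_two) (hφpos x hx).ne'
      exact h1.congr_of_eventuallyEq (hwloc x hx)
    · exact contDiffAt_const.congr_of_eventuallyEq (hwout x fun h => hx (hsupp h))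
  -- the derivative of w on Ω
  have hwD : ∀ x ∈ Ω, ∀ v, fderiv ℝ w x v
      = 2 * u x / φ x * fderiv ℝ u x v - (u x / φ x) ^ 2 * fderiv ℝ φ x v := by
    intro x hx v
    have hφx : φ x ≠ 0 := (hφpos x hx).ne'
    have hsq : HasFDerivAt (fun y => u y ^ 2) ((2 * u x) • fderiv ℝ u x) x := by
      have h := ((huD x).hasFDerivAt).mul ((huD x).hasFDerivAt)
      have h2 : u x • fderiv ℝ u x + u x • fderiv ℝ u x = (2 * u x) • fderiv ℝ u x := by
        rw [two_mul, add_smul]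
      rw [h2] at h
      exact h.congr_of_eventuallyEq (Filter.Eventually.of_forall fun y => by simp [pow_two])
    have hinv : HasFDerivAt (fun y => (φ y)⁻¹) (-((φ x) ^ 2)⁻¹ • fderiv ℝ φ x) x :=
      (hasDerivAt_inv hφx).comp_hasFDerivAt x (hφdiff x hx).hasFDerivAt
    have hmul := hsq.mul hinv
    have hw' : fderiv ℝ w x = fderiv ℝ (fun y => u y ^ 2 * (φ y)⁻¹) x := by
      refine Filter.EventuallyEq.fderiv_eq ?_
      filter_upwards [hΩ.mem_nhds hx] with y hy
      simp [hwdef, hy, div_eq_mul_inv]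
    rw [hw', show (fun y => u y ^ 2 * (φ y)⁻¹) = (fun y => u y ^ 2) * (fun y => (φ y)⁻¹) from rfl,
      hmul.fderiv]
    simp only [ContinuousLinearMap.add_apply, ContinuousLinearMap.smul_apply, smul_eq_mul,
      neg_smul, ContinuousLinearMap.neg_apply]
    field_simp
    ring
  have hwcs : HasCompactSupport w := HasCompactSupport.intro hc hw0
  have hfw0 : ∀ x ∉ tsupport u, fderiv ℝ w x = 0 := by
    intro x hx
    have h : fderiv ℝ w x = fderiv ℝ (fun _ => (0 : ℝ)) x := (hwout x hx).fderiv_eq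
    simpa using h
  have hgu0 : ∀ x ∉ tsupport u, fderiv ℝ u x = 0 := by
    intro x hx
    have h : u =ᶠ[𝓝 x] fun _ => (0 : ℝ) := by
      filter_upwards [hKo.mem_nhds hx] with y hy
      exact image_eq_zero_of_notMem_tsupport hy
    have h2 : fderiv ℝ u x = fderiv ℝ (fun _ => (0 : ℝ)) x := h.fderiv_eq
    simpa using h2
  have hfwcont : Continuous (fderiv ℝ w) := hwC1.continuous_fderiv one_ne_zero
  have hΦ'C1 : ContDiff ℝ 1 (fderiv ℝ Φ) := hΦC2.fderiv_right (by norm_num)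
  -- integration by parts in each coordinate
  have ibp : ∀ i : Fin N,
      (∫ x, w x * fderiv ℝ (fun y => fderiv ℝ Φ y (EuclideanSpace.single i 1)) x
        (EuclideanSpace.single i 1))
      = - ∫ x, fderiv ℝ w x (EuclideanSpace.single i 1)
          * fderiv ℝ Φ x (EuclideanSpace.single i 1) := by
    intro i
    set v := EuclideanSpace.single i (1 : ℝ) with hv
    have hgC1 : ContDiff ℝ 1 (fun y => fderiv ℝ Φ y v) := hΦ'C1.clm_apply contDiff_const
    have int1 : Integrable (fun x => fderiv ℝ w x v * fderiv ℝ Φ x v) := by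
      apply Continuous.integrable_of_hasCompactSupport
      · exact (hfwcont.clm_apply continuous_const).mul hgC1.continuous
      · exact HasCompactSupport.intro hc fun x hx => by simp [hfw0 x hx]
    have int2 : Integrable (fun x => w x * fderiv ℝ (fun y => fderiv ℝ Φ y v) x v) := by
      apply Continuous.integrable_of_hasCompactSupport
      · exact hwC1.continuous.mul ((hgC1.continuous_fderiv one_ne_zero).clm_apply continuous_const)
      · exact HasCompactSupport.intro hc fun x hx => by simp [hw0 x hx]
    have int3 : Integrable (fun x => w x * fderiv ℝ Φ x v) := by
      apply Continuous.integrable_of_hasCompactSupport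
      · exact hwC1.continuous.mul hgC1.continuous
      · exact HasCompactSupport.intro hc fun x hx => by simp [hw0 x hx]
    exact integral_mul_fderiv_eq_neg_fderiv_mul_of_integrable int1 int2 int3
      (fun x _ => hwC1.differentiable one_ne_zero x) (fun x _ => hgC1.differentiable one_ne_zero x)
  -- sum over coordinates
  set G : EuclideanSpace ℝ (Fin N) → ℝ := fun x =>
    ∑ i, fderiv ℝ w x (EuclideanSpace.single i 1) * fderiv ℝ Φ x (EuclideanSpace.single i 1)
    with hGdef
  have hGcont : Continuous G := by
    apply continuous_finset_sum
    intro i _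
    exact (hfwcont.clm_apply continuous_const).mul
      ((hΦC2.continuous_fderiv (by norm_num)).clm_apply continuous_const)
  have key : ∫ x, w x * lap Φ x = - ∫ x, G x := by
    have hL : ∫ x, w x * lap Φ x
        = ∑ i, ∫ x, w x * fderiv ℝ (fun y => fderiv ℝ Φ y (EuclideanSpace.single i 1)) x
            (EuclideanSpace.single i 1) := by
      rw [← integral_finset_sum]
      · congr 1; ext x; rw [lap, Finset.mul_sum]
      · intro i _
        have hgC1 : ContDiff ℝ 1 (fun y => fderiv ℝ Φ y (EuclideanSpace.single i 1)) :=
          hΦ'C1.clm_apply contDiff_const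
        apply Continuous.integrable_of_hasCompactSupport
        · exact hwC1.continuous.mul ((hgC1.continuous_fderiv one_ne_zero).clm_apply continuous_const)
        · exact HasCompactSupport.intro hc fun x hx => by simp [hw0 x hx]
    have hR : ∫ x, G x = ∑ i, ∫ x, fderiv ℝ w x (EuclideanSpace.single i 1)
        * fderiv ℝ Φ x (EuclideanSpace.single i 1) := by
      rw [hGdef, integral_finset_sum]
      intro i _
      have hgC1 : ContDiff ℝ 1 (fun y => fderiv ℝ Φ y (EuclideanSpace.single i 1)) :=
        hΦ'C1.clm_apply contDiff_const
      apply Continuous.integrable_of_hasCompactSupport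
      · exact (hfwcont.clm_apply continuous_const).mul hgC1.continuous
      · exact HasCompactSupport.intro hc fun x hx => by simp [hfw0 x hx]
    rw [hL, hR, ← Finset.sum_neg_distrib]
    exact Finset.sum_congr rfl fun i _ => ibp i
  -- restrict integrals to Ω
  have resG : ∫ x in Ω, G x = ∫ x, G x := by
    apply setIntegral_eq_integral_of_forall_compl_eq_zero
    intro x hx
    have hxK : x ∉ tsupport u := fun h => hx (hsupp h)
    simp [hGdef, hfw0 x hxK]
  have resW : ∫ x in Ω, w x * lap Φ x = ∫ x, w x * lap Φ x := by
    apply setIntegral_eq_integral_of_forall_compl_eq_zero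
    intro x hx
    have hxK : x ∉ tsupport u := fun h => hx (hsupp h)
    simp [hw0 x hxK]
  -- pointwise identities on Ω
  have hsuppV : ∀ x, u x ≠ 0 → x ∈ V := fun x hx => hKV (subset_tsupport u (by simpa using hx))
  have pt1 : ∀ x ∈ Ω, lap φ x / φ x * u x ^ 2 = w x * lap Φ x := by
    intro x hx
    by_cases hux : u x = 0
    · simp [hwdef, hx, hux]
    · have hxV := hsuppV x hux
      rw [hlapΦ x hxV]
      simp only [hwdef, if_pos hx]
      field_simp
  have pt2 : ∀ x ∈ Ω,
      ‖gradient u x - (u x / φ x) • gradient φ x‖ ^ 2 = ‖gradient u x‖ ^ 2 - G x := by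
    intro x hx
    have hφx : φ x ≠ 0 := (hφpos x hx).ne'
    rw [norm_sq_coord, norm_sq_coord]
    have hGx : G x = ∑ i, (2 * u x / φ x * fderiv ℝ u x (EuclideanSpace.single i 1)
        - (u x / φ x) ^ 2 * fderiv ℝ φ x (EuclideanSpace.single i 1))
        * fderiv ℝ Φ x (EuclideanSpace.single i 1) := by
      refine Finset.sum_congr rfl fun i _ => ?_
      rw [hwD x hx]
    rw [hGx, ← Finset.sum_sub_distrib]
    by_cases hux : u x = 0
    · refine Finset.sum_congr rfl fun i _ => ?_
      simp [hux, gradient_coord]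
    · have hxV := hsuppV x hux
      refine Finset.sum_congr rfl fun i _ => ?_
      rw [hfΦ x hxV]
      have h1 : (gradient u x - (u x / φ x) • gradient φ x) i
          = fderiv ℝ u x (EuclideanSpace.single i 1)
            - u x / φ x * fderiv ℝ φ x (EuclideanSpace.single i 1) := by
        simp [gradient_coord]
      rw [h1, gradient_coord]
      field_simp
      ring
  -- integrability on Ω
  have hgradcont : Continuous (fun x => ‖gradient u x‖ ^ 2) := by
    have : Continuous (gradient u) := by
      have h1 : Continuous (fderiv ℝ u) := hu2.continuous_fderiv two_ne_zero
      exact (InnerProductSpace.toDual ℝ _).symm.continuous.comp h1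
    exact (this.norm.pow 2)
  have hgrad_cs : HasCompactSupport (fun x => ‖gradient u x‖ ^ 2) :=
    HasCompactSupport.intro hc fun x hx => by simp [gradient, hgu0 x hx]
  have intA : IntegrableOn (fun x => ‖gradient u x‖ ^ 2) Ω :=
    (hgradcont.integrable_of_hasCompactSupport hgrad_cs).integrableOn
  have intG : IntegrableOn G Ω := by
    refine (hGcont.integrable_of_hasCompactSupport ?_).integrableOn
    exact HasCompactSupport.intro hc fun x hx => by simp [hGdef, hfw0 x hx]
  calc ∫ x in Ω, ‖gradient u x - (u x / φ x) • gradient φ x‖ ^ 2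
      = ∫ x in Ω, (‖gradient u x‖ ^ 2 - G x) := setIntegral_congr_fun hΩ.measurableSet pt2
    _ = (∫ x in Ω, ‖gradient u x‖ ^ 2) - ∫ x in Ω, G x := integral_sub intA intG
    _ = (∫ x in Ω, ‖gradient u x‖ ^ 2) + ∫ x in Ω, lap φ x / φ x * u x ^ 2 := by
        have : ∫ x in Ω, G x = - ∫ x in Ω, lap φ x / φ x * u x ^ 2 := by
          rw [resG, setIntegral_congr_fun hΩ.measurableSet pt1, resW, key, neg_neg]
        rw [this, sub_neg_eq_add]
end

section
/- Let Ω ⊆ ℝ^N be open, φ ∈ C⁴(Ω) positive, u ∈ C_0^∞(Ω), and set v = u/φ. Then ∫_Ω |Δu|² dx - ∫_Ω (Δ²φ/φ)|u|² dx = ∫_Ω |φΔv + 2∇φ·∇v|² dx - 2∫_Ω φ Δφ |∇v|² dx. -/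
open MeasureTheory Metric Set Filter Topology

namespace RellichAux

variable {N : ℕ}

noncomputable def Di (i : Fin N) (f : EuclideanSpace ℝ (Fin N) → ℝ)
    (x : EuclideanSpace ℝ (Fin N)) : ℝ :=
  fderiv ℝ f x (EuclideanSpace.single i 1)

lemma lap_eq (f : EuclideanSpace ℝ (Fin N) → ℝ) (x) : lap f x = ∑ i, Di i (Di i f) x := rfl

lemma Di_congr {i : Fin N} {f g : EuclideanSpace ℝ (Fin N) → ℝ} {x} (h : f =ᶠ[𝓝 x] g) :
    Di i f x = Di i g x := by
  unfold Di; rw [h.fderiv_eq]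

lemma Di_mul {i : Fin N} {f g : EuclideanSpace ℝ (Fin N) → ℝ} {x}
    (hf : DifferentiableAt ℝ f x) (hg : DifferentiableAt ℝ g x) :
    Di i (fun y => f y * g y) x = f x * Di i g x + Di i f x * g x := by
  simp [Di, fderiv_fun_mul hf hg, mul_comm]

lemma Di_add {i : Fin N} {f g : EuclideanSpace ℝ (Fin N) → ℝ} {x}
    (hf : DifferentiableAt ℝ f x) (hg : DifferentiableAt ℝ g x) :
    Di i (fun y => f y + g y) x = Di i f x + Di i g x := by
  simp [Di, fderiv_fun_add hf hg]

lemma Di_sub {i : Fin N} {f g : EuclideanSpace ℝ (Fin N) → ℝ} {x}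
    (hf : DifferentiableAt ℝ f x) (hg : DifferentiableAt ℝ g x) :
    Di i (fun y => f y - g y) x = Di i f x - Di i g x := by
  simp [Di, fderiv_fun_sub hf hg]

lemma Di_const_mul {i : Fin N} {f : EuclideanSpace ℝ (Fin N) → ℝ} {x} (c : ℝ)
    (hf : DifferentiableAt ℝ f x) :
    Di i (fun y => c * f y) x = c * Di i f x := by
  simp [Di, fderiv_const_mul hf c]

lemma contDiffAt_Di {m : ℕ} {f : EuclideanSpace ℝ (Fin N) → ℝ} {x} (i : Fin N)
    (h : ContDiffAt ℝ (m + 1 : ℕ) f x) : ContDiffAt ℝ m (Di i f) x := by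
  have h1 : ContDiffAt ℝ m (fderiv ℝ f) x := by
    apply h.fderiv_right
    norm_cast
  exact h1.clm_apply contDiffAt_const

lemma differentiableAt_Di {m : ℕ} {f : EuclideanSpace ℝ (Fin N) → ℝ} {x} (i : Fin N)
    (h : ContDiffAt ℝ (m + 2 : ℕ) f x) : DifferentiableAt ℝ (Di i f) x := by
  have := contDiffAt_Di (m := m + 1) i (by exact_mod_cast h)
  exact this.differentiableAt (by simp)

lemma contDiffAt_lap {m : ℕ} {f : EuclideanSpace ℝ (Fin N) → ℝ} {x}
    (h : ContDiffAt ℝ (m + 2 : ℕ) f x) : ContDiffAt ℝ m (lap f) x := by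
  have : (lap f : EuclideanSpace ℝ (Fin N) → ℝ) = fun z => ∑ i, Di i (Di i f) z := by
    funext z; exact lap_eq f z
  rw [this]
  apply ContDiffAt.sum
  intro i _
  exact contDiffAt_Di (m := m) i (contDiffAt_Di (m := m + 1) i (by exact_mod_cast h))

lemma Di_zero_of_zero_on {S : Set (EuclideanSpace ℝ (Fin N))} (hS : IsOpen S)
    {f : EuclideanSpace ℝ (Fin N) → ℝ} (h : ∀ y ∈ S, f y = 0) {x} (hx : x ∈ S) (i : Fin N) :
    Di i f x = 0 := by
  have he : f =ᶠ[𝓝 x] fun _ => 0 := by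
    filter_upwards [hS.mem_nhds hx] with y hy
    exact h y hy
  rw [Di_congr he]
  simp [Di]

lemma gradient_apply (f : EuclideanSpace ℝ (Fin N) → ℝ) (x : EuclideanSpace ℝ (Fin N))
    (i : Fin N) : gradient f x i = Di i f x := by
  have h1 : (inner ℝ (gradient f x) (EuclideanSpace.single i (1:ℝ)) : ℝ)
      = fderiv ℝ f x (EuclideanSpace.single i 1) := by
    rw [gradient]
    exact InnerProductSpace.toDual_symm_apply
  rw [Di, ← h1]
  rw [PiLp.inner_apply]
  simp [EuclideanSpace.single_apply]

lemma inner_gradient_eq (f g : EuclideanSpace ℝ (Fin N) → ℝ) (x : EuclideanSpace ℝ (Fin N)) :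
    (inner ℝ (gradient f x) (gradient g x) : ℝ) = ∑ i, Di i f x * Di i g x := by
  rw [PiLp.inner_apply]
  simp [gradient_apply, mul_comm]

lemma norm_gradient_sq (f : EuclideanSpace ℝ (Fin N) → ℝ) (x : EuclideanSpace ℝ (Fin N)) :
    ‖gradient f x‖ ^ 2 = ∑ i, (Di i f x) ^ 2 := by
  rw [← real_inner_self_eq_norm_sq, PiLp.inner_apply]
  simp [gradient_apply, sq]

lemma integral_fderiv_zero {f : EuclideanSpace ℝ (Fin N) → ℝ}
    (hf : ContDiff ℝ 1 f) (hs : HasCompactSupport f) (w : EuclideanSpace ℝ (Fin N)) :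
    ∫ x, fderiv ℝ f x w = 0 := by
  obtain ⟨R, hR0, hRs⟩ : ∃ R, 0 < R ∧ tsupport f ⊆ ball 0 R := by
    rcases hs.isBounded.subset_ball_lt 0 0 with ⟨R, hR, hsub⟩
    exact ⟨R, hR, hsub⟩
  set χb : ContDiffBump (0 : EuclideanSpace ℝ (Fin N)) :=
    ⟨R, 2 * R, hR0, by linarith⟩
  set χ : EuclideanSpace ℝ (Fin N) → ℝ := fun x => χb x with hχ
  have hχs : HasCompactSupport χ := χb.hasCompactSupport
  have hχc : ContDiff ℝ 1 χ := by exact χb.contDiff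
  obtain ⟨C, hC⟩ := hf.lipschitzWith_of_hasCompactSupport hs (by norm_num)
  obtain ⟨D, hD⟩ := hχc.lipschitzWith_of_hasCompactSupport hχs (by norm_num)
  have key := hC.integral_lineDeriv_mul_eq hD hχs w (μ := volume)
  have hrhs : ∀ x, lineDeriv ℝ χ x (-w) * f x = 0 := by
    intro x
    by_cases hx : f x = 0
    · simp [hx]
    · have hx' : x ∈ ball (0 : EuclideanSpace ℝ (Fin N)) R :=
        hRs (subset_tsupport f (by simpa using hx))
      have hone : χ =ᶠ[𝓝 x] fun _ => 1 := by
        filter_upwards [isOpen_ball.mem_nhds hx'] with y hy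
        exact χb.one_of_mem_closedBall (by simpa [χb] using le_of_lt (mem_ball_iff_norm.1 hy))
      have : lineDeriv ℝ χ x (-w) = 0 := by
        have hd : DifferentiableAt ℝ χ x := (hχc.differentiable (by norm_num)).differentiableAt
        rw [hd.lineDeriv_eq_fderiv, hone.fderiv_eq]
        simp
      simp [this]
  have hlhs : ∀ x, lineDeriv ℝ f x w * χ x = fderiv ℝ f x w := by
    intro x
    by_cases hx : x ∈ tsupport f
    · have h1 : χ x = 1 := χb.one_of_mem_closedBall
        (by simpa [χb] using le_of_lt (mem_ball_iff_norm.1 (hRs hx)))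
      rw [h1, mul_one, ((hf.differentiable (by norm_num)).differentiableAt).lineDeriv_eq_fderiv]
    · have h0 : f =ᶠ[𝓝 x] fun _ => 0 := by
        filter_upwards [(isOpen_compl_iff.2 (isClosed_tsupport f)).mem_nhds hx] with y hy
        simpa using image_eq_zero_of_notMem_tsupport hy
      have hd : DifferentiableAt ℝ f x := (hf.differentiable (by norm_num)).differentiableAt
      rw [hd.lineDeriv_eq_fderiv, h0.fderiv_eq]
      simp
  calc ∫ x, fderiv ℝ f x w = ∫ x, lineDeriv ℝ f x w * χ x := by simp_rw [hlhs]
    _ = ∫ x, lineDeriv ℝ χ x (-w) * f x := key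
    _ = 0 := by simp_rw [hrhs]; simp

lemma integrableOn_aux {f : EuclideanSpace ℝ (Fin N) → ℝ}
    {Ω K : Set (EuclideanSpace ℝ (Fin N))}
    (hΩ : IsOpen Ω) (hK : IsCompact K) (hKΩ : K ⊆ Ω)
    (hf : ∀ x ∈ Ω, ContinuousAt f x) (h0 : ∀ x ∉ K, f x = 0) :
    IntegrableOn f Ω := by
  have h1 : IntegrableOn f K :=
    ContinuousOn.integrableOn_compact hK fun x hx => (hf x (hKΩ hx)).continuousWithinAt
  have h2 : IntegrableOn f (Ω \ K) := by
    apply (integrableOn_zero : IntegrableOn (fun _ => (0:ℝ)) _ _).congr_fun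
      (fun x hx => (h0 x hx.2).symm) (hΩ.measurableSet.diff hK.measurableSet)
  exact (h1.union h2).mono_set fun x hx => by
    by_cases h : x ∈ K
    · exact Or.inl h
    · exact Or.inr ⟨hx, h⟩

lemma pointwise_identity
    {Ω : Set (EuclideanSpace ℝ (Fin N))} (hΩ : IsOpen Ω)
    {φ : EuclideanSpace ℝ (Fin N) → ℝ} (hφ : ContDiffOn ℝ 4 φ Ω)
    (hφ0 : ∀ y ∈ Ω, φ y ≠ 0)
    {u : EuclideanSpace ℝ (Fin N) → ℝ} (hu : ContDiff ℝ (⊤ : ℕ∞) u)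
    {v : EuclideanSpace ℝ (Fin N) → ℝ} (hv : v = fun y => u y / φ y)
    (W : Fin N → EuclideanSpace ℝ (Fin N) → ℝ)
    (hW : W = fun i y =>
      2 * (v y * (φ y * (lap φ y * Di i v y)))
      + (v y * (v y * (lap φ y * Di i φ y))
        - v y * (v y * (φ y * Di i (lap φ) y))))
    {x : EuclideanSpace ℝ (Fin N)} (hx : x ∈ Ω) :
    (lap u x) ^ 2 - (lap (lap φ) x / φ x) * (u x) ^ 2
      - (φ x * lap v x + 2 * ∑ i, Di i φ x * Di i v x) ^ 2
      + 2 * (φ x * lap φ x * ∑ i, (Di i v x) ^ 2)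
    = ∑ i, Di i (W i) x := by
  have hφA : ∀ y ∈ Ω, ContDiffAt ℝ 4 φ y := fun y hy => hφ.contDiffAt (hΩ.mem_nhds hy)
  have hvA : ∀ y ∈ Ω, ContDiffAt ℝ 4 v y := by
    intro y hy
    rw [hv]
    exact (hu.contDiffAt.of_le (WithTop.coe_le_coe.2 le_top)).div (hφA y hy) (hφ0 y hy)
  have hLA : ∀ y ∈ Ω, ContDiffAt ℝ 2 (lap φ) y := fun y hy =>
    contDiffAt_lap (m := 2) (by exact_mod_cast hφA y hy)
  have dφ : ∀ y ∈ Ω, DifferentiableAt ℝ φ y := fun y hy =>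
    (hφA y hy).differentiableAt (by norm_num)
  have dv : ∀ y ∈ Ω, DifferentiableAt ℝ v y := fun y hy =>
    (hvA y hy).differentiableAt (by norm_num)
  have dDiφ : ∀ y ∈ Ω, ∀ i, DifferentiableAt ℝ (Di i φ) y := fun y hy i =>
    differentiableAt_Di (m := 2) i (by exact_mod_cast hφA y hy)
  have dDiv : ∀ y ∈ Ω, ∀ i, DifferentiableAt ℝ (Di i v) y := fun y hy i =>
    differentiableAt_Di (m := 2) i (by exact_mod_cast hvA y hy)
  have dL : ∀ y ∈ Ω, DifferentiableAt ℝ (lap φ) y := fun y hy =>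
    (hLA y hy).differentiableAt (by norm_num)
  have dDiL : ∀ y ∈ Ω, ∀ i, DifferentiableAt ℝ (Di i (lap φ)) y := fun y hy i =>
    differentiableAt_Di (m := 0) i (by exact_mod_cast hLA y hy)
  have keyA : ∀ y ∈ Ω, ∀ i, Di i u y = φ y * Di i v y + Di i φ y * v y := by
    intro y hy i
    have huv : u =ᶠ[𝓝 y] fun z => φ z * v z := by
      filter_upwards [hΩ.mem_nhds hy] with z hz
      rw [hv]
      field_simp [hφ0 z hz]
    rw [Di_congr huv, Di_mul (dφ y hy) (dv y hy)]
  have keyB : ∀ i, Di i (Di i u) x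
      = φ x * Di i (Di i v) x + 2 * (Di i φ x * Di i v x) + Di i (Di i φ) x * v x := by
    intro i
    have e1 : Di i u =ᶠ[𝓝 x] fun y => φ y * Di i v y + Di i φ y * v y := by
      filter_upwards [hΩ.mem_nhds hx] with y hy
      exact keyA y hy i
    rw [Di_congr e1,
      Di_add ((dφ x hx).fun_mul (dDiv x hx i)) ((dDiφ x hx i).fun_mul (dv x hx)),
      Di_mul (dφ x hx) (dDiv x hx i), Di_mul (dDiφ x hx i) (dv x hx)]
    ring
  have keyC : lap u x = φ x * lap v x + 2 * (∑ i, Di i φ x * Di i v x) + lap φ x * v x := by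
    rw [lap_eq u x, lap_eq v x, lap_eq φ x]
    rw [Finset.sum_congr rfl fun i _ => keyB i]
    rw [Finset.sum_add_distrib, Finset.sum_add_distrib, ← Finset.mul_sum, ← Finset.mul_sum,
      ← Finset.sum_mul]
  have keyD : ∀ i, Di i (W i) x
      = 2 * (φ x * lap φ x * (Di i v x) ^ 2)
        + 4 * (v x * lap φ x * (Di i φ x * Di i v x))
        + 2 * (v x * φ x * lap φ x * Di i (Di i v) x)
        + (v x) ^ 2 * lap φ x * Di i (Di i φ) x
        - (v x) ^ 2 * φ x * Di i (Di i (lap φ)) x := by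
    intro i
    have d1 : DifferentiableAt ℝ (fun y => lap φ y * Di i v y) x := (dL x hx).mul (dDiv x hx i)
    have d2 : DifferentiableAt ℝ (fun y => φ y * (lap φ y * Di i v y)) x := (dφ x hx).mul d1
    have d3 : DifferentiableAt ℝ (fun y => v y * (φ y * (lap φ y * Di i v y))) x :=
      (dv x hx).mul d2
    have d4 : DifferentiableAt ℝ (fun y => lap φ y * Di i φ y) x := (dL x hx).mul (dDiφ x hx i)
    have d5 : DifferentiableAt ℝ (fun y => v y * (lap φ y * Di i φ y)) x := (dv x hx).mul d4
    have d6 : DifferentiableAt ℝ (fun y => v y * (v y * (lap φ y * Di i φ y))) x :=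
      (dv x hx).mul d5
    have d7 : DifferentiableAt ℝ (fun y => φ y * Di i (lap φ) y) x :=
      (dφ x hx).mul (dDiL x hx i)
    have d8 : DifferentiableAt ℝ (fun y => v y * (φ y * Di i (lap φ) y)) x := (dv x hx).mul d7
    have d9 : DifferentiableAt ℝ (fun y => v y * (v y * (φ y * Di i (lap φ) y))) x :=
      (dv x hx).mul d8
    rw [hW]
    rw [Di_add ((differentiableAt_const (2:ℝ)).fun_mul d3) (d6.fun_sub d9),
      Di_const_mul 2 d3, Di_sub d6 d9,
      Di_mul (dv x hx) d2, Di_mul (dφ x hx) d1, Di_mul (dL x hx) (dDiv x hx i),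
      Di_mul (dv x hx) d5, Di_mul (dv x hx) d4, Di_mul (dL x hx) (dDiφ x hx i),
      Di_mul (dv x hx) d8, Di_mul (dv x hx) d7, Di_mul (dφ x hx) (dDiL x hx i)]
    ring
  have hux : u x = φ x * v x := by
    rw [hv]; field_simp [hφ0 x hx]
  have hlapL : lap (lap φ) x = ∑ i, Di i (Di i (lap φ)) x := lap_eq (lap φ) x
  rw [Finset.sum_congr rfl fun i _ => keyD i]
  simp only [Finset.sum_add_distrib, Finset.sum_sub_distrib, ← Finset.mul_sum]
  rw [keyC, hux, hlapL, lap_eq v x, lap_eq φ x]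
  have hφx := hφ0 x hx
  field_simp
  ring

end RellichAux

open RellichAux

/-- Rellich-type ground state representation identity. -/
theorem rellich_identity (N : ℕ) (Ω : Set (EuclideanSpace ℝ (Fin N))) (hΩ : IsOpen Ω)
    (φ : EuclideanSpace ℝ (Fin N) → ℝ) (hφ : ContDiffOn ℝ 4 φ Ω)
    (hφpos : ∀ x ∈ Ω, 0 < φ x)
    (u : EuclideanSpace ℝ (Fin N) → ℝ)
    (hu : ContDiff ℝ (⊤ : ℕ∞) u) (hc : HasCompactSupport u) (hsupp : tsupport u ⊆ Ω)
    (v : EuclideanSpace ℝ (Fin N) → ℝ) (hv : v = fun x => u x / φ x) :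
    (∫ x in Ω, (lap u x) ^ 2) - (∫ x in Ω, (lap (lap φ) x / φ x) * (u x) ^ 2)
      = (∫ x in Ω,
          (φ x * lap v x + 2 * (inner ℝ (gradient φ x) (gradient v x) : ℝ)) ^ 2)
        - 2 * ∫ x in Ω, φ x * lap φ x * ‖gradient v x‖ ^ 2 := by
  have hφ0 : ∀ y ∈ Ω, φ y ≠ 0 := fun y hy => (hφpos y hy).ne'
  set K := tsupport u with hK
  have hKc : IsCompact K := hc
  have hKΩ : K ⊆ Ω := hsupp
  have hKo : IsOpen Kᶜ := (isClosed_tsupport u).isOpen_compl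
  -- vanishing facts off K
  have hu0 : ∀ y ∈ Kᶜ, u y = 0 := fun y hy => image_eq_zero_of_notMem_tsupport hy
  have hv0 : ∀ y ∈ Kᶜ, v y = 0 := by
    intro y hy; rw [hv]; simp [hu0 y hy]
  have hDiv0 : ∀ i, ∀ y ∈ Kᶜ, Di i v y = 0 := fun i y hy =>
    Di_zero_of_zero_on hKo hv0 hy i
  have hDiu0 : ∀ i, ∀ y ∈ Kᶜ, Di i u y = 0 := fun i y hy =>
    Di_zero_of_zero_on hKo hu0 hy i
  have hlapu0 : ∀ y ∈ Kᶜ, lap u y = 0 := by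
    intro y hy
    rw [lap_eq]
    apply Finset.sum_eq_zero
    intro i _
    exact Di_zero_of_zero_on hKo (hDiu0 i) hy i
  -- the vector field
  set W : Fin N → EuclideanSpace ℝ (Fin N) → ℝ := fun i y =>
      2 * (v y * (φ y * (lap φ y * Di i v y)))
      + (v y * (v y * (lap φ y * Di i φ y))
        - v y * (v y * (φ y * Di i (lap φ) y))) with hWdef
  have hW0 : ∀ i, ∀ y ∈ Kᶜ, W i y = 0 := by
    intro i y hy
    simp [hWdef, hv0 y hy]
  have hDiW0 : ∀ i, ∀ y ∈ Kᶜ, Di i (W i) y = 0 := fun i y hy =>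
    Di_zero_of_zero_on hKo (hW0 i) hy i
  -- smoothness facts on Ω
  have hφA : ∀ y ∈ Ω, ContDiffAt ℝ 4 φ y := fun y hy => hφ.contDiffAt (hΩ.mem_nhds hy)
  have hvA : ∀ y ∈ Ω, ContDiffAt ℝ 4 v y := by
    intro y hy
    rw [hv]
    exact (hu.contDiffAt.of_le (WithTop.coe_le_coe.2 le_top)).div (hφA y hy) (hφ0 y hy)
  have hLA : ∀ y ∈ Ω, ContDiffAt ℝ 2 (lap φ) y := fun y hy =>
    contDiffAt_lap (m := 2) (by exact_mod_cast hφA y hy)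
  -- W is C¹ with compact support
  have hWc : ∀ i, ContDiff ℝ 1 (W i) := by
    intro i
    rw [contDiff_iff_contDiffAt]
    intro x
    by_cases hx : x ∈ Ω
    · have c1 : ContDiffAt ℝ 1 v x := (hvA x hx).of_le (by norm_num)
      have c2 : ContDiffAt ℝ 1 φ x := (hφA x hx).of_le (by norm_num)
      have c3 : ContDiffAt ℝ 1 (lap φ) x := (hLA x hx).of_le (by norm_num)
      have c4 : ContDiffAt ℝ 1 (Di i v) x :=
        contDiffAt_Di (m := 1) i (by exact_mod_cast (hvA x hx).of_le (by norm_num))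
      have c5 : ContDiffAt ℝ 1 (Di i φ) x :=
        contDiffAt_Di (m := 1) i (by exact_mod_cast (hφA x hx).of_le (by norm_num))
      have c6 : ContDiffAt ℝ 1 (Di i (lap φ)) x :=
        contDiffAt_Di (m := 1) i (by exact_mod_cast hLA x hx)
      exact (contDiffAt_const.mul (c1.mul (c2.mul (c3.mul c4)))).add
        ((c1.mul (c1.mul (c3.mul c5))).sub (c1.mul (c1.mul (c2.mul c6))))
    · have hx' : x ∈ Kᶜ := fun hxK => hx (hKΩ hxK)
      have he : W i =ᶠ[𝓝 x] fun _ => 0 := by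
        filter_upwards [hKo.mem_nhds hx'] with y hy
        exact hW0 i y hy
      exact contDiffAt_const.congr_of_eventuallyEq he
  have hWs : ∀ i, HasCompactSupport (W i) := fun i =>
    HasCompactSupport.intro hKc fun y hy => hW0 i y hy
  -- continuity helpers on Ω
  have hsumc : ∀ x ∈ Ω, ContinuousAt (fun y => ∑ i, Di i φ y * Di i v y) x := by
    intro x hx
    have : ContDiffAt ℝ 0 (fun y => ∑ i, Di i φ y * Di i v y) x := by
      apply ContDiffAt.sum
      intro i _
      exact (contDiffAt_Di (m := 0) i
          (by exact_mod_cast (hφA x hx).of_le (by norm_num) : ContDiffAt ℝ (0+1:ℕ) φ x)).mul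
        (contDiffAt_Di (m := 0) i
          (by exact_mod_cast (hvA x hx).of_le (by norm_num) : ContDiffAt ℝ (0+1:ℕ) v x))
    exact this.continuousAt
  have hsq : ∀ x ∈ Ω, ContinuousAt (fun y => ∑ i, (Di i v y) ^ 2) x := by
    intro x hx
    have : ContDiffAt ℝ 0 (fun y => ∑ i, (Di i v y) ^ 2) x := by
      apply ContDiffAt.sum
      intro i _
      have h := (contDiffAt_Di (m := 0) i
          (by exact_mod_cast (hvA x hx).of_le (by norm_num) : ContDiffAt ℝ (0+1:ℕ) v x))
      exact h.mul h |>.congr_of_eventuallyEq (by filter_upwards with y; ring)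
    exact this.continuousAt
  have hφc : ∀ x ∈ Ω, ContinuousAt φ x := fun x hx => (hφA x hx).continuousAt
  have hlapφc : ∀ x ∈ Ω, ContinuousAt (lap φ) x := fun x hx => (hLA x hx).continuousAt
  have hlapvc : ∀ x ∈ Ω, ContinuousAt (lap v) x := fun x hx =>
    (contDiffAt_lap (m := 0)
      (by exact_mod_cast (hvA x hx).of_le (by norm_num) : ContDiffAt ℝ (0+2:ℕ) v x)).continuousAt
  have hlapv0 : ∀ x ∈ Kᶜ, lap v x = 0 := by
    intro x hx
    rw [lap_eq]
    exact Finset.sum_eq_zero fun i _ => Di_zero_of_zero_on hKo (hDiv0 i) hx i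
  -- integrability of the four integrands
  have hg1 : IntegrableOn (fun x => (lap u x) ^ 2) Ω := by
    apply integrableOn_aux hΩ hKc hKΩ
    · intro x hx
      exact ((contDiffAt_lap (m := 0)
        (by exact_mod_cast hu.contDiffAt.of_le (WithTop.coe_le_coe.2 le_top) : ContDiffAt ℝ (0+2:ℕ) u x)).continuousAt).pow 2
    · intro x hx
      simp [hlapu0 x hx]
  have hg2 : IntegrableOn (fun x => lap (lap φ) x / φ x * (u x) ^ 2) Ω := by
    apply integrableOn_aux hΩ hKc hKΩ
    · intro x hx
      have h1 : ContinuousAt (lap (lap φ)) x :=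
        (contDiffAt_lap (m := 0) (by exact_mod_cast hLA x hx : ContDiffAt ℝ (0+2:ℕ) (lap φ) x)).continuousAt
      exact (h1.div (hφc x hx) (hφ0 x hx)).mul ((hu.continuous.continuousAt).pow 2)
    · intro x hx
      simp [hu0 x hx]
  have hg3 : IntegrableOn
      (fun x => (φ x * lap v x + 2 * ∑ i, Di i φ x * Di i v x) ^ 2) Ω := by
    apply integrableOn_aux hΩ hKc hKΩ
    · intro x hx
      exact (((hφc x hx).mul (hlapvc x hx)).add
        (continuousAt_const.mul (hsumc x hx))).pow 2
    · intro x hx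
      have : ∀ i, Di i v x = 0 := fun i => hDiv0 i x hx
      simp [hlapv0 x hx, this]
  have hg4 : IntegrableOn (fun x => φ x * lap φ x * ∑ i, (Di i v x) ^ 2) Ω := by
    apply integrableOn_aux hΩ hKc hKΩ
    · intro x hx
      exact ((hφc x hx).mul (hlapφc x hx)).mul (hsq x hx)
    · intro x hx
      have : ∀ i, Di i v x = 0 := fun i => hDiv0 i x hx
      simp [this]
  -- integrability of the divergence terms
  have hDiWint : ∀ i, IntegrableOn (fun x => Di i (W i) x) Ω := by
    intro i
    have hcont : Continuous (Di i (W i)) :=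
      ((hWc i).continuous_fderiv (by norm_num)).clm_apply continuous_const
    have hcs : HasCompactSupport (Di i (W i)) :=
      HasCompactSupport.intro hKc fun y hy => hDiW0 i y hy
    exact (hcont.integrable_of_hasCompactSupport hcs).integrableOn
  -- each divergence integral vanishes
  have hZ : ∀ i, (∫ x in Ω, Di i (W i) x) = 0 := by
    intro i
    rw [setIntegral_eq_integral_of_forall_compl_eq_zero
      (fun x hx => hDiW0 i x (fun hxK => hx (hKΩ hxK)))]
    exact integral_fderiv_zero (hWc i) (hWs i) (EuclideanSpace.single i 1)
  -- the combined integral vanishes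
  have hzero : (∫ x in Ω, ((lap u x) ^ 2 - (lap (lap φ) x / φ x) * (u x) ^ 2
      - (φ x * lap v x + 2 * ∑ i, Di i φ x * Di i v x) ^ 2
      + 2 * (φ x * lap φ x * ∑ i, (Di i v x) ^ 2))) = 0 := by
    rw [setIntegral_congr_fun hΩ.measurableSet
      (fun x hx => pointwise_identity hΩ hφ hφ0 hu hv W hWdef hx)]
    rw [integral_finset_sum Finset.univ (fun i _ => hDiWint i)]
    exact Finset.sum_eq_zero fun i _ => hZ i
  -- split the combined integral
  have hexp : (∫ x in Ω, ((lap u x) ^ 2 - (lap (lap φ) x / φ x) * (u x) ^ 2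
      - (φ x * lap v x + 2 * ∑ i, Di i φ x * Di i v x) ^ 2
      + 2 * (φ x * lap φ x * ∑ i, (Di i v x) ^ 2)))
      = (∫ x in Ω, (lap u x) ^ 2) - (∫ x in Ω, (lap (lap φ) x / φ x) * (u x) ^ 2)
        - (∫ x in Ω, (φ x * lap v x + 2 * ∑ i, Di i φ x * Di i v x) ^ 2)
        + 2 * ∫ x in Ω, φ x * lap φ x * ∑ i, (Di i v x) ^ 2 := by
    have hA : IntegrableOn
        (fun x => (lap u x) ^ 2 - (lap (lap φ) x / φ x) * (u x) ^ 2) Ω := hg1.sub hg2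
    have hB : IntegrableOn
        (fun x => (lap u x) ^ 2 - (lap (lap φ) x / φ x) * (u x) ^ 2
          - (φ x * lap v x + 2 * ∑ i, Di i φ x * Di i v x) ^ 2) Ω := hA.sub hg3
    have hC : IntegrableOn
        (fun x => 2 * (φ x * lap φ x * ∑ i, (Di i v x) ^ 2)) Ω := hg4.const_mul 2
    rw [integral_add hB hC, integral_sub hA hg3, integral_sub hg1 hg2, integral_const_mul 2 _]
  simp only [inner_gradient_eq, norm_gradient_sq]
  linarith [hzero, hexp]
end

section
/- Let Ω ⊆ ℝ^N be open, W ∈ L¹_loc(Ω) nonnegative, and suppose there exists a positive φ ∈ C⁴(Ω) with -Δφ ≥ 0 in Ω and (Δ² - W)φ ≥ 0 in Ω. Then for all u ∈ C_0^∞(Ω), ∫_Ω |Δu|² dx ≥ ∫_Ω W|u|² dx. -/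
open MeasureTheory

namespace RellichAux

variable {N : ℕ}

noncomputable def pd (f : EuclideanSpace ℝ (Fin N) → ℝ) (i : Fin N) :
    EuclideanSpace ℝ (Fin N) → ℝ :=
  fun x => fderiv ℝ f x (EuclideanSpace.single i 1)

lemma lap_eq_sum (f : EuclideanSpace ℝ (Fin N) → ℝ) (x : EuclideanSpace ℝ (Fin N)) :
    lap f x = ∑ i, pd (pd f i) i x := rfl

variable {f g : EuclideanSpace ℝ (Fin N) → ℝ} {x : EuclideanSpace ℝ (Fin N)} {i : Fin N}
  {s : Set (EuclideanSpace ℝ (Fin N))}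

lemma pd_congr_nhds (h : f =ᶠ[nhds x] g) (i : Fin N) : pd f i x = pd g i x := by
  unfold pd; rw [h.fderiv_eq]

lemma pd_congr_open (hs : IsOpen s) (h : ∀ y ∈ s, f y = g y) (hx : x ∈ s) (i : Fin N) :
    pd f i x = pd g i x :=
  pd_congr_nhds (by filter_upwards [hs.mem_nhds hx] using h) i

lemma lap_congr_open (hs : IsOpen s) (h : ∀ y ∈ s, f y = g y) (hx : x ∈ s) :
    lap f x = lap g x := by
  rw [lap_eq_sum, lap_eq_sum]
  exact Finset.sum_congr rfl fun i _ =>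
    pd_congr_open hs (fun y hy => pd_congr_open hs h hy i) hx i

lemma pd_sub (hf : DifferentiableAt ℝ f x) (hg : DifferentiableAt ℝ g x) :
    pd (fun y => f y - g y) i x = pd f i x - pd g i x := by
  unfold pd; rw [fderiv_fun_sub hf hg]; simp

lemma pd_mul (hf : DifferentiableAt ℝ f x) (hg : DifferentiableAt ℝ g x) :
    pd (fun y => f y * g y) i x = pd f i x * g x + f x * pd g i x := by
  unfold pd; rw [fderiv_fun_mul hf hg]; simp; ring

lemma pd_const_mul (c : ℝ) (hg : DifferentiableAt ℝ g x) :
    pd (fun y => c * g y) i x = c * pd g i x := by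
  unfold pd; rw [fderiv_const_mul hg c]; simp

lemma hasFDerivAt_inv' (hg : DifferentiableAt ℝ g x) (h0 : g x ≠ 0) :
    HasFDerivAt (fun y => (g y)⁻¹) ((-(g x ^ 2)⁻¹) • fderiv ℝ g x) x :=
  (hasDerivAt_inv h0).comp_hasFDerivAt x hg.hasFDerivAt

lemma pd_inv (hg : DifferentiableAt ℝ g x) (h0 : g x ≠ 0) :
    pd (fun y => (g y)⁻¹) i x = -(pd g i x) / g x ^ 2 := by
  unfold pd
  rw [(hasFDerivAt_inv' hg h0).fderiv]
  simp [div_eq_mul_inv]; ring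

lemma pd_div (hf : DifferentiableAt ℝ f x) (hg : DifferentiableAt ℝ g x) (h0 : g x ≠ 0) :
    pd (fun y => f y / g y) i x = (pd f i x * g x - f x * pd g i x) / g x ^ 2 := by
  have hinv : DifferentiableAt ℝ (fun y => (g y)⁻¹) x :=
    (hasFDerivAt_inv' hg h0).differentiableAt
  have : (fun y => f y / g y) = fun y => f y * (g y)⁻¹ := by
    funext y; rw [div_eq_mul_inv]
  rw [this, pd_mul hf hinv, pd_inv hg h0]
  field_simp
  ring

lemma pd_sq (hf : DifferentiableAt ℝ f x) :
    pd (fun y => f y ^ 2) i x = 2 * f x * pd f i x := by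
  have : (fun y => f y ^ 2) = fun y => f y * f y := by funext y; ring
  rw [this, pd_mul hf hf]; ring

lemma contDiff_pd {n m : WithTop ℕ∞} (h : ContDiff ℝ n f) (hmn : m + 1 ≤ n) (i : Fin N) :
    ContDiff ℝ m (pd f i) :=
  (h.fderiv_right hmn).clm_apply contDiff_const

lemma contDiff_lap {n m : WithTop ℕ∞} (h : ContDiff ℝ n f) (hmn : m + 1 + 1 ≤ n) :
    ContDiff ℝ m (lap f) := by
  have : lap f = fun x => ∑ i, pd (pd f i) i x := rfl
  rw [this]
  exact ContDiff.sum fun i _ =>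
    contDiff_pd (contDiff_pd h hmn i) le_rfl i

lemma support_pd_subset (f : EuclideanSpace ℝ (Fin N) → ℝ) (i : Fin N) :
    Function.support (pd f i) ⊆ tsupport f := by
  intro x hx
  apply support_fderiv_subset ℝ (f := f)
  intro h
  exact hx (by simp [pd, h])

lemma tsupport_pd_subset (f : EuclideanSpace ℝ (Fin N) → ℝ) (i : Fin N) :
    tsupport (pd f i) ⊆ tsupport f :=
  closure_minimal (support_pd_subset f i) isClosed_closure

lemma pd_eq_zero_of_nmem (hx : x ∉ tsupport f) : pd f i x = 0 := by
  by_contra h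
  exact hx (support_pd_subset f i h)

lemma support_lap_subset (f : EuclideanSpace ℝ (Fin N) → ℝ) :
    Function.support (lap f) ⊆ tsupport f := by
  intro x hx
  rw [Function.mem_support, lap_eq_sum] at hx
  by_contra hxn
  apply hx
  apply Finset.sum_eq_zero
  intro i _
  apply pd_eq_zero_of_nmem
  intro hmem
  exact hxn (tsupport_pd_subset f i hmem)

lemma lap_eq_zero_of_nmem (hx : x ∉ tsupport f) : lap f x = 0 := by
  by_contra h
  exact hx (support_lap_subset f h)

lemma hasCompactSupport_pd (h : HasCompactSupport f) (i : Fin N) :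
    HasCompactSupport (pd f i) :=
  h.mono' (support_pd_subset f i)

lemma hasCompactSupport_lap (h : HasCompactSupport f) :
    HasCompactSupport (lap f) :=
  h.mono' (support_lap_subset f)

/-- integral of a partial derivative of a compactly supported C¹ function on `Fin (n+1) → ℝ`
vanishes -/
lemma pi_integral_pd_eq_zero {n : ℕ} (g : (Fin (n + 1) → ℝ) → ℝ)
    (hg : ContDiff ℝ 1 g) (hc : HasCompactSupport g) (i : Fin (n + 1)) :
    ∫ y, fderiv ℝ g y (Pi.single i 1) = 0 := by
  obtain ⟨r, hr⟩ := hc.isBounded.subset_ball 0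
  set R : ℝ := max r 1 with hR
  have hRpos : (0 : ℝ) < R := lt_of_lt_of_le one_pos (le_max_right _ _)
  have hsupp : ∀ y ∈ tsupport g, ∀ j, |y j| < R := by
    intro y hy j
    have h1 : ‖y‖ < r := by simpa using hr hy
    have h2 : ‖y j‖ ≤ ‖y‖ := norm_le_pi_norm y j
    have : ‖y j‖ < R := lt_of_le_of_lt h2 (lt_of_lt_of_le h1 (le_max_left _ _))
    simpa using this
  set a : Fin (n + 1) → ℝ := fun _ => -R
  set b : Fin (n + 1) → ℝ := fun _ => R
  have hle : a ≤ b := fun j => by simp [a, b]; linarith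
  have hts : tsupport g ⊆ Set.Icc a b := by
    intro y hy
    constructor <;> intro j <;> have := hsupp y hy j
    · simp only [a]; cases abs_lt.1 this; linarith
    · simp only [b]; cases abs_lt.1 this; linarith
  have hdg : Differentiable ℝ g := hg.differentiable one_ne_zero
  have hcontfd : Continuous fun y => fderiv ℝ g y (Pi.single i 1) :=
    (hg.continuous_fderiv one_ne_zero).clm_apply continuous_const
  -- the vector field
  set F : Fin (n + 1) → (Fin (n + 1) → ℝ) → ℝ := fun j => if j = i then g else fun _ => 0
  set F' : Fin (n + 1) → (Fin (n + 1) → ℝ) → (Fin (n + 1) → ℝ) →L[ℝ] ℝ :=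
    fun j y => if j = i then fderiv ℝ g y else 0
  have hsum : ∀ y, (∑ j, F' j y (Pi.single j 1)) = fderiv ℝ g y (Pi.single i 1) := by
    intro y
    rw [Finset.sum_eq_single i]
    · simp [F']
    · intro j _ hj; simp [F', hj]
    · intro h; exact absurd (Finset.mem_univ i) h
  have key := MeasureTheory.integral_divergence_of_hasFDerivAt_off_countable' a b hle
    F F' ∅ Set.countable_empty
    (fun j => by
      by_cases h : j = i
      · subst h; simp only [F, if_pos rfl]; exact hg.continuous.continuousOn
      · simp only [F, if_neg h]; exact continuousOn_const)
    (fun x _ j => by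
      by_cases h : j = i
      · subst h; simp only [F, F', if_pos rfl]; exact (hdg x).hasFDerivAt
      · simp only [F, F', if_neg h]; exact hasFDerivAt_const 0 x)
    (by
      apply (hcontfd.continuousOn (s := Set.Icc a b)).integrableOn_compact isCompact_Icc |>.congr_fun
      · intro y _; exact (hsum y).symm
      · exact measurableSet_Icc)
  have hfaces : ∀ j : Fin (n + 1),
      ((∫ x in Set.Icc (a ∘ j.succAbove) (b ∘ j.succAbove), F j (j.insertNth (b j) x)) -
        ∫ x in Set.Icc (a ∘ j.succAbove) (b ∘ j.succAbove), F j (j.insertNth (a j) x)) = 0 := by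
    intro j
    by_cases h : j = i
    · subst h
      have hb : ∀ x : Fin n → ℝ, g (j.insertNth (b j) x) = 0 := by
        intro x
        apply image_eq_zero_of_notMem_tsupport
        intro hmem
        have := hsupp _ hmem j
        rw [Fin.insertNth_apply_same] at this
        simp only [b] at this
        rw [abs_of_pos hRpos] at this
        exact lt_irrefl _ this
      have ha : ∀ x : Fin n → ℝ, g (j.insertNth (a j) x) = 0 := by
        intro x
        apply image_eq_zero_of_notMem_tsupport
        intro hmem
        have := hsupp _ hmem j
        rw [Fin.insertNth_apply_same] at this
        simp only [a] at this
        rw [abs_neg, abs_of_pos hRpos] at this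
        exact lt_irrefl _ this
      simp only [F, if_pos rfl]
      rw [MeasureTheory.integral_congr_ae (Filter.Eventually.of_forall fun x => hb x),
        MeasureTheory.integral_congr_ae (Filter.Eventually.of_forall fun x => ha x)]
      simp
    · simp [F, if_neg h]
  rw [MeasureTheory.integral_congr_ae (Filter.Eventually.of_forall hsum)] at key
  rw [Finset.sum_congr rfl (fun j _ => hfaces j), Finset.sum_const, smul_zero] at key
  rw [← MeasureTheory.setIntegral_eq_integral_of_forall_compl_eq_zero
    (s := Set.Icc a b) (fun y hy => ?_), key]
  have : y ∉ tsupport g := fun hmem => hy (hts hmem)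
  have hfz : fderiv ℝ g y = 0 := by
    by_contra hne
    exact this (support_fderiv_subset ℝ hne)
  rw [hfz]; rfl

lemma integral_pd_eq_zero (f : EuclideanSpace ℝ (Fin N) → ℝ)
    (hf : ContDiff ℝ 1 f) (hc : HasCompactSupport f) (i : Fin N) :
    ∫ x, pd f i x = 0 := by
  obtain ⟨n, rfl⟩ : ∃ n, N = n + 1 := ⟨N - 1, (Nat.succ_pred_eq_of_pos i.pos).symm⟩
  set L := EuclideanSpace.equiv (Fin (n + 1)) ℝ with hL
  set g : (Fin (n + 1) → ℝ) → ℝ := f ∘ L.symm with hgdef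
  have hg : ContDiff ℝ 1 g := hf.comp L.symm.contDiff
  have hcg : HasCompactSupport g := hc.comp_homeomorph L.symm.toHomeomorph
  have hfd : ∀ x : EuclideanSpace ℝ (Fin (n + 1)),
      pd f i x = fderiv ℝ g (L x) (Pi.single i 1) := by
    intro x
    have h1 : HasFDerivAt g (fderiv ℝ g (L x)) (L x) :=
      ((hg.differentiable one_ne_zero) (L x)).hasFDerivAt
    have h2 : HasFDerivAt (⇑L) (L : EuclideanSpace ℝ (Fin (n+1)) →L[ℝ] (Fin (n+1) → ℝ)) x :=
      L.hasFDerivAt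
    have h3 : HasFDerivAt f ((fderiv ℝ g (L x)).comp
        (L : EuclideanSpace ℝ (Fin (n+1)) →L[ℝ] (Fin (n+1) → ℝ))) x := by
      have := h1.comp x h2
      have heq : g ∘ ⇑L = f := by
        funext y; simp [hgdef, Function.comp]
      rwa [heq] at this
    show fderiv ℝ f x (EuclideanSpace.single i 1) = _
    rw [h3.fderiv]
    rfl
  have hmp := EuclideanSpace.volume_preserving_symm_measurableEquiv_toLp (Fin (n + 1))
  have hemb : MeasurableEmbedding (⇑(MeasurableEquiv.toLp 2 (Fin (n + 1) → ℝ)).symm) :=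
    (MeasurableEquiv.toLp 2 (Fin (n + 1) → ℝ)).symm.measurableEmbedding
  calc ∫ x, pd f i x
      = ∫ x, (fun y => fderiv ℝ g y (Pi.single i 1))
          ((MeasurableEquiv.toLp 2 (Fin (n + 1) → ℝ)).symm x) := by
        apply integral_congr_ae; filter_upwards with x
        rw [hfd x]; rfl
    _ = ∫ y, fderiv ℝ g y (Pi.single i 1) :=
        hmp.integral_comp hemb (fun y => fderiv ℝ g y (Pi.single i 1))
    _ = 0 := pi_integral_pd_eq_zero g hg hcg i

lemma cont_pd_pd {f : EuclideanSpace ℝ (Fin N) → ℝ} (hf : ContDiff ℝ 2 f) (i : Fin N) :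
    Continuous (pd (pd f i) i) :=
  (contDiff_pd (m := 0) (contDiff_pd (m := 1) hf (by norm_num) i) (by norm_num) i).continuous

lemma green {f g : EuclideanSpace ℝ (Fin N) → ℝ}
    (hf : ContDiff ℝ 2 f) (hg : ContDiff ℝ 2 g)
    (hcg : HasCompactSupport g) (hcf : HasCompactSupport f) :
    ∫ x, lap f x * g x = ∫ x, f x * lap g x := by
  have hdf : ∀ x, DifferentiableAt ℝ f x := fun x => (hf.differentiable (by norm_num)) x
  have hdg : ∀ x, DifferentiableAt ℝ g x := fun x => (hg.differentiable (by norm_num)) x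
  have hpf1 : ∀ i : Fin N, ContDiff ℝ 1 (pd f i) := fun i => contDiff_pd hf (by norm_num) i
  have hpg1 : ∀ i : Fin N, ContDiff ℝ 1 (pd g i) := fun i => contDiff_pd hg (by norm_num) i
  have hdpf : ∀ (i : Fin N) x, DifferentiableAt ℝ (pd f i) x := fun i x =>
    ((hpf1 i).differentiable one_ne_zero) x
  have hdpg : ∀ (i : Fin N) x, DifferentiableAt ℝ (pd g i) x := fun i x =>
    ((hpg1 i).differentiable one_ne_zero) x
  have hint1 : ∀ i : Fin N, Integrable (fun x => pd (pd f i) i x * g x) := fun i =>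
    ((cont_pd_pd hf i).mul hg.continuous).integrable_of_hasCompactSupport
      (hcg.mul_left)
  have hint2 : ∀ i : Fin N, Integrable (fun x => f x * pd (pd g i) i x) := fun i =>
    (hf.continuous.mul (cont_pd_pd hg i)).integrable_of_hasCompactSupport
      ((hasCompactSupport_pd (hasCompactSupport_pd hcg i) i).mul_left)
  have key : ∀ i : Fin N, ∫ x, pd (pd f i) i x * g x = ∫ x, f x * pd (pd g i) i x := by
    intro i
    set h : EuclideanSpace ℝ (Fin N) → ℝ := fun x => pd f i x * g x - f x * pd g i x with hh
    have hch : HasCompactSupport h := by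
      have h1 : HasCompactSupport (fun x => pd f i x * g x) := hcg.mul_left
      have h2 : HasCompactSupport (fun x => f x * pd g i x) :=
        (hasCompactSupport_pd hcg i).mul_left
      have : h = (fun x => pd f i x * g x) + -(fun x => f x * pd g i x) := by
        funext x; simp [hh, sub_eq_add_neg]
      rw [this]
      exact h1.add (HasCompactSupport.neg h2)
    have hsmooth : ContDiff ℝ 1 h :=
      ((hpf1 i).mul (hg.of_le (by norm_num))).sub ((hf.of_le (by norm_num)).mul (hpg1 i))
    have hzero := integral_pd_eq_zero h hsmooth hch i
    have hpd : ∀ x, pd h i x =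
        pd (pd f i) i x * g x - f x * pd (pd g i) i x := by
      intro x
      rw [hh]
      rw [pd_sub ((hdpf i x).fun_mul (hdg x)) ((hdf x).fun_mul (hdpg i x)),
        pd_mul (hdpf i x) (hdg x), pd_mul (hdf x) (hdpg i x)]
      ring
    rw [integral_congr_ae (Filter.Eventually.of_forall hpd)] at hzero
    have := MeasureTheory.integral_sub (hint1 i) (hint2 i)
    rw [this] at hzero
    linarith
  calc ∫ x, lap f x * g x = ∫ x, ∑ i, pd (pd f i) i x * g x := by
        apply integral_congr_ae; filter_upwards with x
        rw [lap_eq_sum, Finset.sum_mul]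
    _ = ∑ i, ∫ x, pd (pd f i) i x * g x :=
        integral_finset_sum _ (fun i _ => hint1 i)
    _ = ∑ i, ∫ x, f x * pd (pd g i) i x := Finset.sum_congr rfl fun i _ => key i
    _ = ∫ x, ∑ i, f x * pd (pd g i) i x :=
        (integral_finset_sum _ (fun i _ => hint2 i)).symm
    _ = ∫ x, f x * lap g x := by
        apply integral_congr_ae; filter_upwards with x
        rw [lap_eq_sum, Finset.mul_sum]

/-- The Davies–Hinz pointwise inequality. -/
lemma dh_pointwise {V : Set (EuclideanSpace ℝ (Fin N))} (hV : IsOpen V)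
    {ψ u f : EuclideanSpace ℝ (Fin N) → ℝ}
    (hψ : ContDiff ℝ 4 ψ) (hu : ContDiff ℝ 4 u)
    (hψpos : ∀ y ∈ V, 0 < ψ y) (hfV : ∀ y ∈ V, f y = u y ^ 2 / ψ y)
    (hx : x ∈ V) (hB : lap ψ x ≤ 0) :
    lap ψ x * lap f x ≤ (lap u x) ^ 2 := by
  have du : ∀ y, DifferentiableAt ℝ u y := fun y => (hu.differentiable (by norm_num)) y
  have dψ : ∀ y, DifferentiableAt ℝ ψ y := fun y => (hψ.differentiable (by norm_num)) y
  have dDu : ∀ (j : Fin N) y, DifferentiableAt ℝ (pd u j) y := fun j y =>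
    ((contDiff_pd (m := 3) hu (by norm_num) j).differentiable (by norm_num)) y
  have dDψ : ∀ (j : Fin N) y, DifferentiableAt ℝ (pd ψ j) y := fun j y =>
    ((contDiff_pd (m := 3) hψ (by norm_num) j).differentiable (by norm_num)) y
  have hP : 0 < ψ x := hψpos x hx
  have hPne : ψ x ≠ 0 := hP.ne'
  set U : ℝ := u x with hU
  set P : ℝ := ψ x with hPdef
  set L : ℝ := lap u x with hL
  set B : ℝ := lap ψ x with hBdef
  set S1 : ℝ := ∑ j, (pd u j x) ^ 2 with hS1
  set S2 : ℝ := ∑ j, pd u j x * pd ψ j x with hS2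
  set S3 : ℝ := ∑ j, (pd ψ j x) ^ 2 with hS3
  have key : ∀ j : Fin N, pd (pd f j) j x =
      (2 / P) * (pd u j x) ^ 2 + (2 * U / P) * pd (pd u j) j x
        - (4 * U / P ^ 2) * (pd u j x * pd ψ j x)
        - (U ^ 2 / P ^ 2) * pd (pd ψ j) j x
        + (2 * U ^ 2 / P ^ 3) * (pd ψ j x) ^ 2 := by
    intro j
    have step1 : ∀ y ∈ V, pd f j y =
        (2 * u y * pd u j y * ψ y - u y ^ 2 * pd ψ j y) / ψ y ^ 2 := by
      intro y hy
      have hne : ψ y ≠ 0 := (hψpos y hy).ne'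
      have e1 : pd f j y = pd (fun z => u z ^ 2 / ψ z) j y :=
        pd_congr_open hV hfV hy j
      rw [e1, pd_div ((du y).fun_pow 2) (dψ y) hne, pd_sq (du y)]
    have e2 : pd (pd f j) j x =
        pd (fun y => (2 * u y * pd u j y * ψ y - u y ^ 2 * pd ψ j y) / ψ y ^ 2) j x :=
      pd_congr_open hV step1 hx j
    have dA : DifferentiableAt ℝ (fun y => 2 * u y * pd u j y * ψ y - u y ^ 2 * pd ψ j y) x :=
      ((((differentiableAt_const 2).mul (du x)).mul (dDu j x)).mul (dψ x)).sub
        (((du x).pow 2).mul (dDψ j x))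
    have dB : DifferentiableAt ℝ (fun y => ψ y ^ 2) x := (dψ x).pow 2
    have hBne : ψ x ^ 2 ≠ 0 := pow_ne_zero 2 hPne
    rw [e2, pd_div dA dB hBne, pd_sq (dψ x),
      pd_sub ((((differentiableAt_const 2).fun_mul (du x)).fun_mul (dDu j x)).fun_mul (dψ x))
        (((du x).fun_pow 2).fun_mul (dDψ j x)),
      pd_mul (((differentiableAt_const 2).fun_mul (du x)).fun_mul (dDu j x)) (dψ x),
      pd_mul ((differentiableAt_const 2).fun_mul (du x)) (dDu j x),
      pd_const_mul 2 (du x),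
      pd_mul ((du x).fun_pow 2) (dDψ j x), pd_sq (du x)]
    rw [hPdef, hU]
    field_simp
    ring
  have hlap : lap f x = (2 / P) * S1 + (2 * U / P) * L - (4 * U / P ^ 2) * S2
      - (U ^ 2 / P ^ 2) * B + (2 * U ^ 2 / P ^ 3) * S3 := by
    rw [lap_eq_sum, Finset.sum_congr rfl (fun j _ => key j)]
    rw [hS1, hS2, hS3, hL, hBdef, lap_eq_sum u x, lap_eq_sum ψ x]
    simp only [Finset.sum_add_distrib, Finset.sum_sub_distrib, ← Finset.mul_sum]
  have h1 : 0 ≤ P ^ 2 * S1 + U ^ 2 * S3 - 2 * U * P * S2 := by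
    have hterm : ∀ j ∈ Finset.univ (α := Fin N),
        2 * U * P * (pd u j x * pd ψ j x) ≤
          P ^ 2 * (pd u j x) ^ 2 + U ^ 2 * (pd ψ j x) ^ 2 := by
      intro j _
      nlinarith [sq_nonneg (P * pd u j x - U * pd ψ j x)]
    have := Finset.sum_le_sum hterm
    rw [← Finset.mul_sum] at this
    simp only [Finset.sum_add_distrib, ← Finset.mul_sum] at this
    rw [hS1, hS2, hS3]
    linarith
  have h2 : 0 ≤ (-2 * B / P ^ 3) * (P ^ 2 * S1 + U ^ 2 * S3 - 2 * U * P * S2) := by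
    apply mul_nonneg (div_nonneg (by linarith) (by positivity)) h1
  have hid : L ^ 2 - B * ((2 / P) * S1 + (2 * U / P) * L - (4 * U / P ^ 2) * S2
      - (U ^ 2 / P ^ 2) * B + (2 * U ^ 2 / P ^ 3) * S3)
      = (L - B * U / P) ^ 2 + (-2 * B / P ^ 3) * (P ^ 2 * S1 + U ^ 2 * S3 - 2 * U * P * S2) := by
    field_simp
    ring
  rw [hlap]
  nlinarith [sq_nonneg (L - B * U / P), h2, hid]

end RellichAux

/-- The supersolution method for Rellich inequalities. -/
theorem rellich_supersolution (N : ℕ) (Ω : Set (EuclideanSpace ℝ (Fin N)))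
    (hΩ : IsOpen Ω)
    (W : EuclideanSpace ℝ (Fin N) → ℝ) (hW : ∀ x ∈ Ω, 0 ≤ W x)
    (hWloc : LocallyIntegrableOn W Ω)
    (φ : EuclideanSpace ℝ (Fin N) → ℝ) (hφ : ContDiffOn ℝ 4 φ Ω)
    (hφpos : ∀ x ∈ Ω, 0 < φ x)
    (hsuper : ∀ x ∈ Ω, 0 ≤ -lap φ x)
    (hbisuper : ∀ x ∈ Ω, 0 ≤ lap (lap φ) x - W x * φ x) :
    ∀ u : EuclideanSpace ℝ (Fin N) → ℝ, ContDiff ℝ (⊤ : ℕ∞) u → HasCompactSupport u →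
      tsupport u ⊆ Ω →
      (∫ x in Ω, (lap u x) ^ 2) ≥ ∫ x in Ω, W x * (u x) ^ 2 := by
  intro u hu hucs hsupp
  classical
  set K : Set (EuclideanSpace ℝ (Fin N)) := tsupport u with hK
  have hKc : IsCompact K := hucs
  have hu4 : ContDiff ℝ 4 u := hu.of_le (by
    have h4 : ((4:ℕ∞) : WithTop ℕ∞) = (4 : WithTop ℕ∞) := by norm_cast
    rw [← h4]; exact WithTop.coe_le_coe.mpr le_top)
  obtain ⟨C, hCc, hKC, hCΩ⟩ := exists_compact_between hKc hΩ hsupp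
  -- a smooth cutoff: 1 near K, supported in C
  obtain ⟨χ, hχ4, hχ1, hχ0⟩ :
      ∃ χ : EuclideanSpace ℝ (Fin N) → ℝ, ContDiff ℝ 4 χ ∧
        (∀ᶠ x in nhdsSet K, χ x = 1) ∧ (∀ x ∉ C, χ x = 0) := by
    obtain ⟨χ, h1, h0, _⟩ := exists_contMDiffMap_one_nhds_of_subset_interior (n := (⊤ : ℕ∞))
      (modelWithCornersSelf ℝ (EuclideanSpace ℝ (Fin N))) hKc.isClosed hKC
    refine ⟨χ, ?_, h1, h0⟩
    have := χ.contMDiff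
    rw [contMDiff_iff_contDiff] at this
    refine this.of_le ?_
    have h4 : ((4:ℕ∞) : WithTop ℕ∞) = (4 : WithTop ℕ∞) := by norm_cast
    rw [← h4]
    exact WithTop.coe_le_coe.mpr le_top
  obtain ⟨O, hOopen, hKO, hχO⟩ := eventually_nhdsSet_iff_exists.mp hχ1
  set V : Set (EuclideanSpace ℝ (Fin N)) := Ω ∩ O with hV
  have hVopen : IsOpen V := hΩ.inter hOopen
  have hVΩ : V ⊆ Ω := Set.inter_subset_left
  have hKV : K ⊆ V := fun x hx => ⟨hsupp hx, hKO hx⟩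
  set ψ : EuclideanSpace ℝ (Fin N) → ℝ := fun x => χ x * φ x with hψdef
  have hψφ : ∀ y ∈ V, ψ y = φ y := fun y hy => by
    rw [hψdef]; dsimp only; rw [hχO y hy.2, one_mul]
  have hψ4 : ContDiff ℝ 4 ψ := by
    rw [contDiff_iff_contDiffAt]
    intro x
    by_cases hx : x ∈ Ω
    · exact (hχ4.contDiffOn.mul hφ).contDiffAt (hΩ.mem_nhds hx)
    · have hxC : x ∉ C := fun h => hx (hCΩ h)
      have hev : ∀ᶠ y in nhds x, (0 : ℝ) = ψ y := by
        filter_upwards [hCc.isClosed.isOpen_compl.mem_nhds hxC] with y hy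
        rw [hψdef]; dsimp only; rw [hχ0 y hy, zero_mul]
      exact contDiffAt_const.congr_of_eventuallyEq (by filter_upwards [hev] with y h using h.symm)
  have hψcs : HasCompactSupport ψ := HasCompactSupport.intro hCc (fun x hx => by
    rw [hψdef]; dsimp only; rw [hχ0 x hx, zero_mul])
  have hψpos : ∀ y ∈ V, 0 < ψ y := fun y hy => by
    rw [hψφ y hy]; exact hφpos y (hVΩ hy)
  set f : EuclideanSpace ℝ (Fin N) → ℝ :=
    fun y => if y ∈ V then u y ^ 2 / ψ y else 0 with hfdef
  have hfV : ∀ y ∈ V, f y = u y ^ 2 / ψ y := fun y hy => by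
    rw [hfdef]; dsimp only; rw [if_pos hy]
  have hf0 : ∀ y ∉ K, f y = 0 := by
    intro y hy
    have huy : u y = 0 := image_eq_zero_of_notMem_tsupport hy
    rw [hfdef]; dsimp only
    split
    · rw [huy]; simp
    · rfl
  have hf2 : ContDiff ℝ 2 f := by
    rw [contDiff_iff_contDiffAt]
    intro x
    by_cases hx : x ∈ V
    · have hq : ContDiffAt ℝ 2 (fun y => u y ^ 2 / ψ y) x :=
        ((hu4.of_le (by norm_num)).pow 2).contDiffAt.div
          (hψ4.of_le (by norm_num)).contDiffAt (hψpos x hx).ne'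
      apply hq.congr_of_eventuallyEq
      filter_upwards [hVopen.mem_nhds hx] with y hy
      exact hfV y hy
    · have hxK : x ∉ K := fun h => hx (hKV h)
      have hev : ∀ᶠ y in nhds x, f y = 0 := by
        filter_upwards [hKc.isClosed.isOpen_compl.mem_nhds hxK] with y hy
        exact hf0 y hy
      exact contDiffAt_const.congr_of_eventuallyEq hev
  have hfcs : HasCompactSupport f := HasCompactSupport.intro hKc hf0
  -- pointwise inequality: W u² ≤ Δ²ψ · f
  have P2 : ∀ x, W x * u x ^ 2 ≤ lap (lap ψ) x * f x := by
    intro x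
    by_cases hux : u x = 0
    · have hfx : f x = 0 := by
        rw [hfdef]; dsimp only; split
        · rw [hux]; simp
        · rfl
      rw [hux, hfx]; simp
    · have hxK : x ∈ K := subset_closure (Function.mem_support.mpr hux)
      have hxV : x ∈ V := hKV hxK
      have hxΩ : x ∈ Ω := hVΩ hxV
      have hfx : f x = u x ^ 2 / φ x := by rw [hfV x hxV, hψφ x hxV]
      have hlap2 : lap (lap ψ) x = lap (lap φ) x :=
        RellichAux.lap_congr_open hVopen
          (fun y hy => RellichAux.lap_congr_open hVopen hψφ hy) hxV
      have hbi := hbisuper x hxΩ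
      have hφx := hφpos x hxΩ
      rw [hlap2, hfx]
      have h1 : W x * φ x ≤ lap (lap φ) x := by linarith
      have h2 : (0:ℝ) ≤ u x ^ 2 / φ x := div_nonneg (sq_nonneg _) hφx.le
      calc W x * u x ^ 2 = (W x * φ x) * (u x ^ 2 / φ x) := by
            field_simp
          _ ≤ lap (lap φ) x * (u x ^ 2 / φ x) := mul_le_mul_of_nonneg_right h1 h2
  -- pointwise inequality: Δψ · Δf ≤ (Δu)²
  have P4 : ∀ x, lap ψ x * lap f x ≤ (lap u x) ^ 2 := by
    intro x
    by_cases hx : x ∈ V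
    · apply RellichAux.dh_pointwise hVopen hψ4 hu4 hψpos hfV hx
      have hlψ : lap ψ x = lap φ x := RellichAux.lap_congr_open hVopen hψφ hx
      rw [hlψ]; linarith [hsuper x (hVΩ hx)]
    · have hxK : x ∉ K := fun h => hx (hKV h)
      have hsub : tsupport f ⊆ K :=
        closure_minimal (fun y hy => Classical.byContradiction fun hc => hy (hf0 y hc))
          hKc.isClosed
      rw [RellichAux.lap_eq_zero_of_nmem (fun h => hxK (hsub h)), mul_zero]
      exact sq_nonneg _
  -- integrability
  have hWK : IntegrableOn W K := hWloc.integrableOn_compact_subset hsupp hKc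
  have hu2cont : Continuous fun x => u x ^ 2 := hu4.continuous.pow 2
  have hu2cs : HasCompactSupport fun x => u x ^ 2 := by
    have he : (fun x : EuclideanSpace ℝ (Fin N) => u x ^ 2) = fun x => u x * u x := by
      funext x; ring
    rw [he]; exact hucs.mul_right
  have IWu : Integrable (fun x => W x * u x ^ 2) := by
    have h1 : Integrable (fun x => u x ^ 2 * W x) (volume.restrict K) := by
      obtain ⟨C, hC⟩ := hu2cs.exists_bound_of_continuous hu2cont
      exact hWK.bdd_mul (c := C) hu2cont.aestronglyMeasurable (Filter.Eventually.of_forall hC)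
    have hss : Function.support (fun x => u x ^ 2 * W x) ⊆ K := by
      intro x hx
      have : u x ≠ 0 := by
        intro h
        apply hx
        simp [h]
      exact subset_closure (Function.mem_support.mpr this)
    have h2 : Integrable (fun x => u x ^ 2 * W x) :=
      (integrableOn_iff_integrable_of_support_subset hss).mp h1
    simpa [mul_comm] using h2
  have contlapψ : Continuous (lap ψ) :=
    (RellichAux.contDiff_lap (m := 2) hψ4 (by norm_num)).continuous
  have contlap2ψ : Continuous (lap (lap ψ)) :=
    (RellichAux.contDiff_lap (m := 0)
      (RellichAux.contDiff_lap (m := 2) hψ4 (by norm_num)) (by norm_num)).continuous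
  have contlapf : Continuous (lap f) :=
    (RellichAux.contDiff_lap (m := 0) hf2 (by norm_num)).continuous
  have contlapu : Continuous (lap u) :=
    (RellichAux.contDiff_lap (m := 0) (hu4.of_le (by norm_num : (2:WithTop ℕ∞) ≤ 4)) (by norm_num)).continuous
  have Ilap2f : Integrable (fun x => lap (lap ψ) x * f x) :=
    (contlap2ψ.mul hf2.continuous).integrable_of_hasCompactSupport hfcs.mul_left
  have Ilapψlapf : Integrable (fun x => lap ψ x * lap f x) :=
    (contlapψ.mul contlapf).integrable_of_hasCompactSupport
      (RellichAux.hasCompactSupport_lap hfcs).mul_left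
  have Ilapu2 : Integrable (fun x => (lap u x) ^ 2) := by
    have he : (fun x : EuclideanSpace ℝ (Fin N) => (lap u x) ^ 2) =
        fun x => lap u x * lap u x := by funext x; ring
    rw [he]
    exact (contlapu.mul contlapu).integrable_of_hasCompactSupport
      (RellichAux.hasCompactSupport_lap hucs).mul_right
  -- Green's identity
  have hgreen : ∫ x, lap (lap ψ) x * f x = ∫ x, lap ψ x * lap f x :=
    RellichAux.green (RellichAux.contDiff_lap (m := 2) hψ4 (by norm_num)) hf2 hfcs
      (RellichAux.hasCompactSupport_lap hψcs)
  -- convert set integrals to full-space integrals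
  have conv1 : ∫ x in Ω, W x * u x ^ 2 = ∫ x, W x * u x ^ 2 :=
    setIntegral_eq_integral_of_forall_compl_eq_zero (fun x hx => by
      have h0 : u x = 0 := image_eq_zero_of_notMem_tsupport (fun h => hx (hsupp h))
      rw [h0]; ring)
  have conv2 : ∫ x in Ω, (lap u x) ^ 2 = ∫ x, (lap u x) ^ 2 :=
    setIntegral_eq_integral_of_forall_compl_eq_zero (fun x hx => by
      rw [RellichAux.lap_eq_zero_of_nmem (fun h => hx (hsupp h))]; ring)
  rw [ge_iff_le, conv1, conv2]
  calc ∫ x, W x * u x ^ 2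
      ≤ ∫ x, lap (lap ψ) x * f x := integral_mono IWu Ilap2f P2
    _ = ∫ x, lap ψ x * lap f x := hgreen
    _ ≤ ∫ x, (lap u x) ^ 2 := integral_mono Ilapψlapf Ilapu2 P4
end

section
/- Let a_1,…,a_n ∈ ℝ^N be distinct points, s ∈ ℝ, α_1,…,α_n ∈ [0,1] with Σ α_i = 1, and define φ_s(x) = Π_{i=1}^n |x-a_i|^{sα_i} on ℝ^N \ {a_1,…,a_n}. Then Δφ_s = φ_s · ( s(N+s-2) Σ_{i=1}^n α_i/|x-a_i|² − s² Σ_{1≤i<j≤n} α_i α_j |a_i-a_j|² / (|x-a_i|²|x-a_j|²) ) at every x ∉ {a_1,…,a_n}. -/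
open Real Finset Filter Topology
open scoped RealInnerProductSpace

lemma sum_sum_eq_two_mul_sum_sum_ite_lt {ι : Type*} [Fintype ι] [LinearOrder ι]
    (f : ι → ι → ℝ) (hsymm : ∀ i j, f i j = f j i) (hdiag : ∀ i, f i i = 0) :
    ∑ i, ∑ j, f i j = 2 * ∑ i, ∑ j, if i < j then f i j else 0 := by
  have hsplit : ∀ i j, f i j = (if i < j then f i j else 0) + if j < i then f j i else 0 := by
    intro i j
    rcases lt_trichotomy i j with h | rfl | h
    · simp [h, h.not_gt]
    · simp [hdiag]
    · simp [h, h.not_gt, hsymm i j]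
  rw [sum_congr rfl fun i _ => sum_congr rfl fun j _ => hsplit i j]
  simp only [sum_add_distrib]
  rw [sum_comm (f := fun i j => if j < i then f j i else 0)]
  ring

section Multipolar

variable {E : Type*} [NormedAddCommGroup E] {ι : Type*} {a : ι → E} {x : E}

noncomputable def multipolar [Fintype ι] (a : ι → E) (c : ι → ℝ) (x : E) : ℝ :=
  ∏ i, ‖x - a i‖ ^ c i

lemma norm_sub_pos_of_notMem_range (hx : x ∉ Set.range a) (i : ι) : 0 < ‖x - a i‖ :=
  norm_pos_iff.2 (sub_ne_zero.2 fun h => hx ⟨i, h.symm⟩)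

lemma eventually_notMem_range [Finite ι] (hx : x ∉ Set.range a) :
    ∀ᶠ y in 𝓝 x, y ∉ Set.range a :=
  (Set.finite_range a).isClosed.isOpen_compl.mem_nhds hx

lemma multipolar_eq_exp [Fintype ι] (c : ι → ℝ) (hx : x ∉ Set.range a) :
    multipolar a c x = exp (∑ i, c i / 2 * log (‖x - a i‖ ^ 2)) := by
  rw [exp_sum]
  refine prod_congr rfl fun i _ => ?_
  rw [rpow_def_of_pos (norm_sub_pos_of_notMem_range hx i), log_pow]
  ring_nf

end Multipolar

section Derivatives

variable {E : Type*} [NormedAddCommGroup E] [InnerProductSpace ℝ E] {ι : Type*} [Fintype ι]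

noncomputable def multipolarLogGrad (a : ι → E) (c : ι → ℝ) (x : E) : E :=
  ∑ i, (c i / ‖x - a i‖ ^ 2) • (x - a i)

variable {a : ι → E} {x : E}

lemma hasFDerivAt_log_norm_sub_sq {b : E} (hx : x ≠ b) :
    HasFDerivAt (fun y => log (‖y - b‖ ^ 2)) ((2 / ‖x - b‖ ^ 2) • innerSL ℝ (x - b)) x := by
  have h := ((hasFDerivAt_id x).sub_const b).norm_sq.log
    (pow_pos (norm_pos_iff.2 (sub_ne_zero.2 hx)) 2).ne'
  refine h.congr_fderiv ?_
  ext v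
  simp only [id, smul_apply, ContinuousLinearMap.comp_apply,
    ContinuousLinearMap.id_apply, innerSL_apply_apply, smul_eq_mul]
  ring

lemma hasFDerivAt_multipolar (c : ι → ℝ) (hx : x ∉ Set.range a) :
    HasFDerivAt (multipolar a c) (multipolar a c x • innerSL ℝ (multipolarLogGrad a c x)) x := by
  have hlog : HasFDerivAt (fun y => ∑ i, c i / 2 * log (‖y - a i‖ ^ 2))
      (∑ i, (c i / 2) • (2 / ‖x - a i‖ ^ 2) • innerSL ℝ (x - a i)) x :=
    HasFDerivAt.fun_sum fun i _ =>
      (hasFDerivAt_log_norm_sub_sq fun h => hx ⟨i, h.symm⟩).const_mul (c i / 2)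
  have heq : multipolar a c =ᶠ[𝓝 x] fun y => exp (∑ i, c i / 2 * log (‖y - a i‖ ^ 2)) :=
    (eventually_notMem_range hx).mono fun y hy => multipolar_eq_exp c hy
  rw [multipolar_eq_exp c hx]
  convert hlog.exp.congr_of_eventuallyEq heq using 2
  ext v
  simp only [smul_apply, FunLike.coe_sum, Finset.sum_apply, innerSL_apply_apply,
    multipolarLogGrad, sum_inner, real_inner_smul_left, smul_eq_mul]
  exact sum_congr rfl fun i _ => by ring

lemma fderiv_multipolar_apply (c : ι → ℝ) (hx : x ∉ Set.range a) (v : E) :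
    fderiv ℝ (multipolar a c) x v = multipolar a c x * ⟪multipolarLogGrad a c x, v⟫ := by
  rw [(hasFDerivAt_multipolar c hx).fderiv, smul_apply, innerSL_apply_apply, smul_eq_mul]

lemma hasFDerivAt_inner_sub_mul_inv_norm_sub_sq {b : E} (v : E) (hx : x ≠ b) :
    HasFDerivAt (fun y => ⟪y - b, v⟫ * (‖y - b‖ ^ 2)⁻¹)
      ((‖x - b‖ ^ 2)⁻¹ • innerSL ℝ v - (2 * ⟪x - b, v⟫ / (‖x - b‖ ^ 2) ^ 2) • innerSL ℝ (x - b))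
      x := by
  have hsub := (hasFDerivAt_id (𝕜 := ℝ) x).sub_const b
  have h := (hsub.inner ℝ (hasFDerivAt_const (𝕜 := ℝ) v x)).mul
    ((hasDerivAt_inv (pow_pos (norm_pos_iff.2 (sub_ne_zero.2 hx)) 2).ne').comp_hasFDerivAt x
      hsub.norm_sq)
  refine h.congr_fderiv ?_
  ext w
  simp only [id_eq, real_inner_comm, map_sub, ContinuousLinearMap.comp_id, neg_smul, smul_neg,
    Function.comp_apply, add_apply, neg_apply, smul_apply, sub_apply, coe_innerSL_apply,
    nsmul_eq_mul, Nat.cast_ofNat, smul_eq_mul, ContinuousLinearMap.comp_apply,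
    ContinuousLinearMap.prod_apply, ContinuousLinearMap.id_apply, zero_apply,
    fderivInnerCLM_apply, inner_zero_right, zero_add]
  ring

lemma hasFDerivAt_inner_multipolarLogGrad (c : ι → ℝ) (hx : x ∉ Set.range a) (v : E) :
    HasFDerivAt (fun y => ⟪multipolarLogGrad a c y, v⟫)
      (∑ i, c i • ((‖x - a i‖ ^ 2)⁻¹ • innerSL ℝ v
        - (2 * ⟪x - a i, v⟫ / (‖x - a i‖ ^ 2) ^ 2) • innerSL ℝ (x - a i))) x := by
  have h := HasFDerivAt.fun_sum fun i (_ : i ∈ univ) =>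
    (hasFDerivAt_inner_sub_mul_inv_norm_sub_sq (b := a i) v fun h => hx ⟨i, h.symm⟩).const_mul
      (c i)
  have hfun : (fun y => ⟪multipolarLogGrad a c y, v⟫)
      = fun y => ∑ i, c i * (⟪y - a i, v⟫ * (‖y - a i‖ ^ 2)⁻¹) := by
    funext y
    simp only [multipolarLogGrad, sum_inner, real_inner_smul_left]
    exact sum_congr rfl fun i _ => by ring
  rwa [hfun]

lemma fderiv_fderiv_multipolar_apply (c : ι → ℝ) (hx : x ∉ Set.range a) (v : E) :
    fderiv ℝ (fun y => fderiv ℝ (multipolar a c) y v) x v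
      = multipolar a c x * (⟪multipolarLogGrad a c x, v⟫ ^ 2
        + ∑ i, c i * (‖v‖ ^ 2 / ‖x - a i‖ ^ 2 - 2 * ⟪x - a i, v⟫ ^ 2 / (‖x - a i‖ ^ 2) ^ 2)) := by
  have heq : (fun y => fderiv ℝ (multipolar a c) y v)
      =ᶠ[𝓝 x] fun y => multipolar a c y * ⟪multipolarLogGrad a c y, v⟫ :=
    (eventually_notMem_range hx).mono fun y hy => fderiv_multipolar_apply c hy v
  rw [heq.fderiv_eq, ((hasFDerivAt_multipolar c hx).fun_mul
    (hasFDerivAt_inner_multipolarLogGrad c hx v)).fderiv]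
  simp only [add_apply, smul_apply, _root_.sum_apply, sub_apply, innerSL_apply_apply, smul_eq_mul,
    real_inner_self_eq_norm_sq]
  rw [mul_add, add_comm, sq]
  congr 1
  · ring
  · exact congrArg _ (sum_congr rfl fun i _ => by ring)

lemma norm_sum_smul_sq_eq [LinearOrder ι] (w : ι → ℝ) (y : ι → E) :
    ‖∑ i, w i • y i‖ ^ 2 = (∑ i, w i) * (∑ i, w i * ‖y i‖ ^ 2)
      - ∑ i, ∑ j, if i < j then w i * w j * ‖y i - y j‖ ^ 2 else 0 := by
  have hpolar : ∀ i j, w i * w j * ⟪y j, y i⟫ = (w i * (w j * ‖y j‖ ^ 2)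
      + w i * ‖y i‖ ^ 2 * w j - w i * w j * ‖y i - y j‖ ^ 2) / 2 := by
    intro i j
    rw [norm_sub_sq_real, real_inner_comm]
    ring
  rw [← real_inner_self_eq_norm_sq]
  simp only [sum_inner, inner_sum, real_inner_smul_left, real_inner_smul_right, ← mul_assoc]
  rw [sum_congr rfl fun i _ => sum_congr rfl fun j _ => hpolar i j]
  simp only [sub_div, add_div, sum_sub_distrib, sum_add_distrib, ← sum_div, ← sum_mul_sum]
  rw [sum_sum_eq_two_mul_sum_sum_ite_lt _ (fun i j => by rw [norm_sub_rev]; ring) (by simp)]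
  ring

end Derivatives

section Laplacian

variable {N : ℕ}

lemma sum_inner_single_sq (u : EuclideanSpace ℝ (Fin N)) :
    ∑ k, ⟪u, EuclideanSpace.single k 1⟫ ^ 2 = ‖u‖ ^ 2 := by
  simpa [sq, real_inner_comm u] using (EuclideanSpace.basisFun (Fin N) ℝ).sum_inner_mul_inner u u

variable {ι : Type*} [Fintype ι] {a : ι → EuclideanSpace ℝ (Fin N)} {x : EuclideanSpace ℝ (Fin N)}

lemma lap_multipolar_eq (c : ι → ℝ) (hx : x ∉ Set.range a) :
    lap (multipolar a c) x = multipolar a c x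
      * (‖multipolarLogGrad a c x‖ ^ 2 + (N - 2) * ∑ i, c i / ‖x - a i‖ ^ 2) := by
  simp only [lap, fderiv_fderiv_multipolar_apply c hx, PiLp.norm_single, norm_one,
    one_pow, ← mul_sum, sum_add_distrib, sum_inner_single_sq]
  rw [sum_comm, mul_sum]
  congr 2
  refine sum_congr rfl fun i _ => ?_
  have hr := (norm_sub_pos_of_notMem_range hx i).ne'
  simp only [← mul_sum, sum_sub_distrib, sum_const, card_univ, Fintype.card_fin, nsmul_eq_mul,
    ← sum_div, sum_inner_single_sq]
  field_simp

lemma lap_multipolar_eq_sum [LinearOrder ι] (c : ι → ℝ) (hx : x ∉ Set.range a) :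
    lap (multipolar a c) x = multipolar a c x
      * ((∑ i, c i + N - 2) * ∑ i, c i / ‖x - a i‖ ^ 2
        - ∑ i, ∑ j, if i < j then
            c i * c j * ‖a i - a j‖ ^ 2 / (‖x - a i‖ ^ 2 * ‖x - a j‖ ^ 2) else 0) := by
  rw [lap_multipolar_eq c hx, multipolarLogGrad, norm_sum_smul_sq_eq]
  have hc : ∀ i, c i / ‖x - a i‖ ^ 2 * ‖x - a i‖ ^ 2 = c i := fun i =>
    div_mul_cancel₀ _ (pow_ne_zero 2 (norm_sub_pos_of_notMem_range hx i).ne')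
  have hpair : ∀ i j, c i * c j / (‖x - a i‖ ^ 2 * ‖x - a j‖ ^ 2) * ‖a j - a i‖ ^ 2
      = c i * c j * ‖a i - a j‖ ^ 2 / (‖x - a i‖ ^ 2 * ‖x - a j‖ ^ 2) := fun i j => by
    rw [norm_sub_rev (a j)]
    ring
  simp only [hc, sub_sub_sub_cancel_left, div_mul_div_comm, hpair]
  ring

end Laplacian

theorem lap_multipolar_general (N n : ℕ) (a : Fin n → EuclideanSpace ℝ (Fin N))
    (s : ℝ)
    (α : Fin n → ℝ)
    (hαsum : ∑ i, α i = 1)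
    (φs : EuclideanSpace ℝ (Fin N) → ℝ)
    (hφs : φs = fun x => ∏ i, ‖x - a i‖ ^ (s * α i)) :
    ∀ x : EuclideanSpace ℝ (Fin N), x ∉ Set.range a →
      lap φs x = φs x *
        (s * ((N : ℝ) + s - 2) * ∑ i, α i / ‖x - a i‖ ^ 2
          - s ^ 2 * ∑ i, ∑ j, if i < j then
              α i * α j * ‖a i - a j‖ ^ 2 / (‖x - a i‖ ^ 2 * ‖x - a j‖ ^ 2)
            else 0) := by
  intro x hx
  have hc : ∑ i, s * α i = s := by rw [← mul_sum, hαsum, mul_one]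
  rw [show φs = multipolar a (fun i => s * α i) from hφs, lap_multipolar_eq_sum _ hx, hc]
  simp only [mul_div_assoc, mul_assoc s, mul_left_comm _ s, ← mul_ite_zero, ← mul_sum]
  ring

/-- Laplacian of the multipolar ground state `φ_s(x) = ∏ |x - aᵢ|^{s αᵢ}`. -/
theorem lap_multipolar (N n : ℕ) (a : Fin n → EuclideanSpace ℝ (Fin N))
    (ha : Function.Injective a) (s : ℝ)
    (α : Fin n → ℝ) (hα0 : ∀ i, 0 ≤ α i) (hα1 : ∀ i, α i ≤ 1)
    (hαsum : ∑ i, α i = 1)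
    (φs : EuclideanSpace ℝ (Fin N) → ℝ)
    (hφs : φs = fun x => ∏ i, ‖x - a i‖ ^ (s * α i)) :
    ∀ x : EuclideanSpace ℝ (Fin N), x ∉ Set.range a →
      lap φs x = φs x *
        (s * ((N : ℝ) + s - 2) * ∑ i, α i / ‖x - a i‖ ^ 2
          - s ^ 2 * ∑ i, ∑ j, if i < j then
              α i * α j * ‖a i - a j‖ ^ 2 / (‖x - a i‖ ^ 2 * ‖x - a j‖ ^ 2)
            else 0) :=
  lap_multipolar_general N n a s α hαsum φs hφs
end

section
/- Let a_1,…,a_n ∈ ℝ^N be distinct, s ∈ ℝ \ {2,4}, α_i = 1/n, and let ξ_{k,i}, ζ_{k,i,j} be as above. Then for all x ∉ {a_1,…,a_n}: Σ_{i=1}^n (α_i/|x-a_i|²) Σ_{1≤k<l≤n} ξ_{k,i}ξ_{l,i}|a_k-a_l|²/(|x-a_k|²|x-a_l|²) = (s(s-4)/(s-2)²) Σ_{1≤i<j≤n} (α_iα_j|a_i-a_j|²/(|x-a_i|²|x-a_j|²)) Σ_{k=1}^n ζ_{k,i,j}/|x-a_k|². -/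
lemma xi_zeta_aux (n : ℕ) (hn0 : (n : ℝ) ≠ 0) (s : ℝ)
    (hs2' : s - 2 ≠ 0) (hs4' : s - 4 ≠ 0)
    (u : Fin n → ℝ) (d : Fin n → Fin n → ℝ) :
    (∑ i, ((1 / (n : ℝ)) / u i) *
        ∑ k, ∑ l, if k < l then
          (if k = i then (s * (1 / (n : ℝ)) - 2) / (s - 2) else s * (1 / (n : ℝ)) / (s - 2)) *
            (if l = i then (s * (1 / (n : ℝ)) - 2) / (s - 2) else s * (1 / (n : ℝ)) / (s - 2)) *
            d k l / (u k * u l)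
        else 0)
    = (s * (s - 4) / (s - 2) ^ 2) *
        ∑ i, ∑ j, if i < j then
          ((1 / (n : ℝ)) * (1 / (n : ℝ)) * d i j / (u i * u j)) *
            ∑ k, (if k = i ∨ k = j then (s * (1 / (n : ℝ)) - 2) / (s - 4)
              else s * (1 / (n : ℝ)) / (s - 4)) / u k
        else 0 := by
  have hc : (1 / (n : ℝ)) * ((s * (1 / (n : ℝ)) - 2) / (s - 2) * (s * (1 / (n : ℝ)) / (s - 2)))
      = s * (s - 4) / (s - 2) ^ 2 * (1 / (n : ℝ) * (1 / (n : ℝ)))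
        * ((s * (1 / (n : ℝ)) - 2) / (s - 4)) := by
    field_simp
  have hc2 : (1 / (n : ℝ)) * (s * (1 / (n : ℝ)) / (s - 2) * (s * (1 / (n : ℝ)) / (s - 2)))
      = s * (s - 4) / (s - 2) ^ 2 * (1 / (n : ℝ) * (1 / (n : ℝ)))
        * (s * (1 / (n : ℝ)) / (s - 4)) := by
    field_simp
  simp only [Finset.mul_sum, mul_ite, mul_zero]
  rw [Finset.sum_comm]
  conv_lhs => enter [2, k]; rw [Finset.sum_comm]
  refine Finset.sum_congr rfl fun k _ => Finset.sum_congr rfl fun l _ => ?_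
  by_cases hkl : k < l
  · simp only [if_pos hkl]
    refine Finset.sum_congr rfl fun i _ => ?_
    have hkl' : k ≠ l := hkl.ne
    by_cases hik : k = i
    · have hli : ¬ l = i := fun h => hkl' (hik.trans h.symm)
      simp only [if_pos hik, if_neg hli, if_pos (Or.inl hik.symm)]
      linear_combination (d k l * (u i)⁻¹ * (u k)⁻¹ * (u l)⁻¹) * hc
    · by_cases hli : l = i
      · simp only [if_neg hik, if_pos hli, if_pos (Or.inr hli.symm)]
        linear_combination (d k l * (u i)⁻¹ * (u k)⁻¹ * (u l)⁻¹) * hc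
      · have h3 : ¬ (i = k ∨ i = l) := by
          rintro (h | h)
          exacts [hik h.symm, hli h.symm]
        simp only [if_neg hik, if_neg hli, if_neg h3]
        linear_combination (d k l * (u i)⁻¹ * (u k)⁻¹ * (u l)⁻¹) * hc2
  · simp [hkl]

/-- The algebraic identity between the `ξ` pair sums and the `ζ` sums used in
the computation of `Δ²φ_s` for equal weights `α_i = 1/n`. -/
theorem xi_zeta_identity (N n : ℕ) (hn : 2 ≤ n)
    (a : Fin n → EuclideanSpace ℝ (Fin N)) (ha : Function.Injective a)
    (s : ℝ) (hs2 : s ≠ 2) (hs4 : s ≠ 4)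
    (α : Fin n → ℝ) (hα : α = fun _ => 1 / (n : ℝ))
    (ξ : Fin n → Fin n → ℝ)
    (hξ : ξ = fun k i => if k = i then (s * α k - 2) / (s - 2) else s * α k / (s - 2))
    (ζ : Fin n → Fin n → Fin n → ℝ)
    (hζ : ζ = fun k i j =>
      if k = i ∨ k = j then (s * α k - 2) / (s - 4) else s * α k / (s - 4)) :
    ∀ x : EuclideanSpace ℝ (Fin N), x ∉ Set.range a →
      (∑ i, (α i / ‖x - a i‖ ^ 2) *
          ∑ k, ∑ l, if k < l then
            ξ k i * ξ l i * ‖a k - a l‖ ^ 2 / (‖x - a k‖ ^ 2 * ‖x - a l‖ ^ 2)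
          else 0)
      = (s * (s - 4) / (s - 2) ^ 2) *
          ∑ i, ∑ j, if i < j then
            (α i * α j * ‖a i - a j‖ ^ 2 / (‖x - a i‖ ^ 2 * ‖x - a j‖ ^ 2)) *
              ∑ k, ζ k i j / ‖x - a k‖ ^ 2
          else 0 := by
  subst hα hξ hζ
  intro x hx
  have hn0 : (n : ℝ) ≠ 0 := Nat.cast_ne_zero.mpr (by omega)
  have hs2' : s - 2 ≠ 0 := sub_ne_zero.mpr hs2
  have hs4' : s - 4 ≠ 0 := sub_ne_zero.mpr hs4
  exact xi_zeta_aux n hn0 s hs2' hs4' (fun i => ‖x - a i‖ ^ 2)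
    (fun k l => ‖a k - a l‖ ^ 2)
end
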